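/- arXiv:0807.3115 — 7 statements merged into one kernel-verified Lean document; each statement's English description precedes it below -/
import Mathlib

section
/- Let N ≥ 1, let A be a real symmetric N×N matrix, and let λ₁ > 0 and λ_N < 0 be real numbers such that: the all-ones vector 𝟏 ∈ ℝ^N satisfies A𝟏 = λ₁𝟏, and every vector v ∈ ℝ^N satisfies λ_N‖v‖² ≤ vᵀAv ≤ λ₁‖v‖² (i.e. λ₁ is the maximum and λ_N the minimum eigenvalue of A). Let X ⊆ [N] be such that A_{x,y} = 0 for all x, y ∈ X. Then |X| ≤ (|λ_N|/(λ₁+|λ_N|))·N. Moreover, if equality holds, then the characteristic vector v_X of X can be written as v_X = c𝟏 + w for some c ∈ ℝ and some w ∈ ℝ^N with Aw = λ_N w. -/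
lemma symdot {N : ℕ} (A : Matrix (Fin N) (Fin N) ℝ) (hsymm : A.IsSymm)
    (a b : Fin N → ℝ) :
    dotProduct a (A.mulVec b) = dotProduct b (A.mulVec a) := by
  rw [Matrix.dotProduct_mulVec, ← Matrix.mulVec_transpose, hsymm.eq, dotProduct_comm]

lemma psd_aux {N : ℕ} (A : Matrix (Fin N) (Fin N) ℝ) (hsymm : A.IsSymm) (lN : ℝ)
    (hmin : ∀ v : Fin N → ℝ, lN * ∑ i, v i ^ 2 ≤ dotProduct v (A.mulVec v))
    (w : Fin N → ℝ) (hw : dotProduct w (A.mulVec w) = lN * ∑ i, w i ^ 2) :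
    A.mulVec w = lN • w := by
  set u : Fin N → ℝ := A.mulVec w - lN • w with hu
  have hdsq : ∀ x : Fin N → ℝ, dotProduct x x = ∑ i, x i ^ 2 := by
    intro x; simp [dotProduct, sq]
  have hb : dotProduct u (A.mulVec w) - lN * dotProduct u w
      = dotProduct u u := by
    rw [hu]
    simp only [dotProduct_sub, sub_dotProduct, dotProduct_smul,
      smul_dotProduct, smul_eq_mul]
  have H : ∀ t : ℝ, 0 ≤ 2 * t * dotProduct u u
      + t ^ 2 * (dotProduct u (A.mulVec u) - lN * ∑ i, u i ^ 2) := by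
    intro t
    have h1 := hmin (w + t • u)
    have hexp : dotProduct (w + t • u) (A.mulVec (w + t • u))
        = dotProduct w (A.mulVec w) + 2 * t * dotProduct u (A.mulVec w)
          + t ^ 2 * dotProduct u (A.mulVec u) := by
      simp only [Matrix.mulVec_add, Matrix.mulVec_smul, dotProduct_add,
        add_dotProduct, dotProduct_smul, smul_dotProduct, smul_eq_mul]
      rw [symdot A hsymm w u]
      ring
    have hsq : ∑ i, (w + t • u) i ^ 2
        = ∑ i, w i ^ 2 + 2 * t * dotProduct u w + t ^ 2 * ∑ i, u i ^ 2 := by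
      simp only [dotProduct, Pi.add_apply, Pi.smul_apply, smul_eq_mul,
        Finset.mul_sum, ← Finset.sum_add_distrib]
      exact Finset.sum_congr rfl (fun i _ => by ring)
    rw [hexp, hsq] at h1
    have e : 2 * t * dotProduct u u
        + t ^ 2 * (dotProduct u (A.mulVec u) - lN * ∑ i, u i ^ 2)
        = (dotProduct w (A.mulVec w) + 2 * t * dotProduct u (A.mulVec w)
            + t ^ 2 * dotProduct u (A.mulVec u))
          - lN * (∑ i, w i ^ 2 + 2 * t * dotProduct u w
            + t ^ 2 * ∑ i, u i ^ 2) := by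
      rw [← hb, hw]; ring
    rw [e]
    exact sub_nonneg.mpr h1
  have hq : 0 ≤ dotProduct u (A.mulVec u) - lN * ∑ i, u i ^ 2 :=
    sub_nonneg.mpr (hmin u)
  have huu : dotProduct u u = 0 := by
    by_contra h
    have hnn : 0 ≤ dotProduct u u := by
      rw [hdsq u]; exact Finset.sum_nonneg fun i _ => sq_nonneg _
    have huu0 : 0 < dotProduct u u := lt_of_le_of_ne hnn (Ne.symm h)
    set s := dotProduct u u with hs
    set q := dotProduct u (A.mulVec u) - lN * ∑ i, u i ^ 2 with hqdef
    have hq1 : 0 < q + 1 := by linarith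
    have hr : s / (q + 1) * (q + 1) = s := div_mul_cancel₀ s (ne_of_gt hq1)
    have hrpos : 0 < s / (q + 1) := div_pos huu0 hq1
    have := H (-(s / (q + 1)))
    nlinarith [this, hr, hrpos, huu0, hq, mul_pos hrpos huu0]
  have h0 : A.mulVec w - lN • w = 0 := hu ▸ dotProduct_self_eq_zero.mp huu
  exact sub_eq_zero.mp h0

set_option maxHeartbeats 1600000
/-- **Hoffman-type bound (weighted version).**
Let `A` be a real symmetric `N × N` matrix with maximum eigenvalue `l1 > 0`
(whose eigenvector is the all-ones vector) and minimum eigenvalue `lN < 0`.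
If `X ⊆ [N]` is such that `A x y = 0` for all `x, y ∈ X`, then
`|X| ≤ (|lN| / (l1 + |lN|)) · N`; and in case of equality the characteristic
vector of `X` is the sum of a constant vector and a `lN`-eigenvector of `A`. -/
theorem stmt0 (N : ℕ) (hN : 1 ≤ N) (A : Matrix (Fin N) (Fin N) ℝ)
    (hsymm : A.IsSymm) (l1 lN : ℝ) (hl1 : 0 < l1) (hlN : lN < 0)
    (hone : A.mulVec (fun _ => (1 : ℝ)) = fun _ => l1)
    (hmax : ∀ v : Fin N → ℝ, dotProduct v (A.mulVec v) ≤ l1 * ∑ i, v i ^ 2)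
    (hmin : ∀ v : Fin N → ℝ, lN * ∑ i, v i ^ 2 ≤ dotProduct v (A.mulVec v))
    (X : Finset (Fin N))
    (hX : ∀ x ∈ X, ∀ y ∈ X, A x y = 0) :
    (X.card : ℝ) ≤ |lN| / (l1 + |lN|) * N ∧
    ((X.card : ℝ) = |lN| / (l1 + |lN|) * N →
      ∃ (c : ℝ) (w : Fin N → ℝ),
        (fun i => if i ∈ X then (1 : ℝ) else 0) = (fun _ => c) + w ∧
        A.mulVec w = lN • w) := by
  have hNpos : (0 : ℝ) < N := by exact_mod_cast Nat.lt_of_lt_of_le Nat.zero_lt_one hN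
  have hNne : (N : ℝ) ≠ 0 := ne_of_gt hNpos
  have habs : |lN| = -lN := abs_of_neg hlN
  set m : ℝ := (X.card : ℝ) with hm
  set v : Fin N → ℝ := fun i => if i ∈ X then 1 else 0 with hv
  set c : ℝ := m / N with hc
  set w : Fin N → ℝ := v - c • ((fun _ => 1) : Fin N → ℝ) with hw
  -- basic sums
  have hvsum : ∑ i, v i = m := by
    simp [hv, hm]
  have hvsq : ∑ i, v i ^ 2 = m := by
    rw [← hvsum]
    apply Finset.sum_congr rfl
    intro i _
    by_cases hi : i ∈ X <;> simp [hv, hi]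
  have hwsum : ∑ i, w i = 0 := by
    simp only [hw, Pi.sub_apply, Pi.smul_apply, smul_eq_mul, mul_one,
      Finset.sum_sub_distrib, hvsum, Finset.sum_const, Finset.card_univ,
      Fintype.card_fin, nsmul_eq_mul]
    rw [hc]
    field_simp
    ring
  have hwsq : ∑ i, w i ^ 2 = m - m ^ 2 / N := by
    have : ∑ i, w i ^ 2 = ∑ i, (v i ^ 2 - 2 * c * v i + c ^ 2) := by
      apply Finset.sum_congr rfl
      intro i _
      simp only [hw, Pi.sub_apply, Pi.smul_apply, smul_eq_mul, mul_one]
      ring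
    rw [this, Finset.sum_add_distrib, Finset.sum_sub_distrib, hvsq,
      ← Finset.mul_sum, hvsum, Finset.sum_const, Finset.card_univ, Fintype.card_fin,
      nsmul_eq_mul, hc]
    field_simp
    ring
  -- quadratic form vanishes on v
  have hQv : dotProduct v (A.mulVec v) = 0 := by
    simp only [dotProduct, Matrix.mulVec]
    apply Finset.sum_eq_zero
    intro x _
    by_cases hx : x ∈ X
    · rw [mul_comm]
      simp only [hv, hx, if_true, mul_one]
      apply Finset.sum_eq_zero
      intro y _
      by_cases hy : y ∈ X
      · simp [dotProduct, hy, hX x hx y hy]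
      · simp [hv, hy]
    · simp [hv, hx]
  -- action of ones vector
  have hones : ∀ u : Fin N → ℝ,
      dotProduct (fun _ => (1 : ℝ)) (A.mulVec u) = l1 * ∑ i, u i := by
    intro u
    rw [symdot A hsymm, hone]
    simp [dotProduct, Finset.mul_sum, mul_comm]
  have hQ1 : dotProduct (fun _ => (1 : ℝ))
      (A.mulVec (fun _ => (1 : ℝ))) = l1 * N := by
    rw [hones]
    simp
  have h1w : dotProduct (fun _ => (1 : ℝ)) (A.mulVec w) = 0 := by
    rw [hones, hwsum, mul_zero]
  -- decomposition of the quadratic form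
  have hvdec : v = c • (fun _ => (1 : ℝ)) + w := by
    rw [hw]; ring_nf
  have hQdec : dotProduct v (A.mulVec v)
      = c ^ 2 * (l1 * N) + dotProduct w (A.mulVec w) := by
    rw [hvdec]
    simp only [Matrix.mulVec_add, Matrix.mulVec_smul, dotProduct_add,
      add_dotProduct, dotProduct_smul, smul_dotProduct, smul_eq_mul]
    rw [symdot A hsymm w (fun _ => (1:ℝ)), hQ1, h1w]
    ring
  have hQw : dotProduct w (A.mulVec w) = -(c ^ 2 * (l1 * N)) := by
    rw [hQv] at hQdec; linarith
  have hkey : lN * (m - m ^ 2 / N) ≤ -(c ^ 2 * (l1 * N)) := by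
    rw [← hQw, ← hwsq]; exact hmin w
  have hcsq : c ^ 2 * (l1 * N) = l1 * m ^ 2 / N := by
    rw [hc]; field_simp
  have hmnn : 0 ≤ m := by rw [hm]; exact Nat.cast_nonneg _
  have hineq : l1 * m ^ 2 + lN * (m * N - m ^ 2) ≤ 0 := by
    rw [hcsq] at hkey
    have := mul_le_mul_of_nonneg_right hkey (le_of_lt hNpos)
    calc l1 * m ^ 2 + lN * (m * N - m ^ 2)
        = (lN * (m - m ^ 2 / N)) * N - (-(l1 * m ^ 2 / N)) * N := by
          field_simp; ring
      _ ≤ 0 := by nlinarith [hkey]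
  have hden : 0 < l1 + |lN| := by rw [habs]; linarith
  constructor
  · rw [div_mul_eq_mul_div, le_div_iff₀ hden, habs]
    rcases eq_or_lt_of_le hmnn with h0 | h0
    · rw [← h0]
      nlinarith [mul_pos (neg_pos.mpr hlN) hNpos]
    · nlinarith [hineq, h0, mul_pos h0 h0]
  · intro heq
    refine ⟨c, w, ?_, ?_⟩
    · funext i
      simp only [Pi.add_apply, hw, Pi.sub_apply, Pi.smul_apply, smul_eq_mul, mul_one, hv]
      ring
    · apply psd_aux A hsymm lN hmin
      rw [hQw, hwsq, hcsq]
      rw [div_mul_eq_mul_div, eq_div_iff (ne_of_gt hden), habs] at heq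
      field_simp
      linear_combination (-1 : ℝ) * m * heq
end

section
/- Let N ≥ 1, let A be a real symmetric N×N matrix, let λ₁ > 0 be such that the all-ones vector 𝟏 ∈ ℝ^N satisfies A𝟏 = λ₁𝟏 and vᵀAv ≤ λ₁‖v‖² for every v ∈ ℝ^N, and let ν > 0 be such that every vector v ∈ ℝ^N orthogonal to 𝟏 satisfies |vᵀAv| ≤ ν‖v‖². Let X, Y ⊆ [N] be such that A_{x,y} = 0 for all x ∈ X and y ∈ Y. Then |X|·|Y| ≤ (ν·N/(λ₁+ν))². Moreover, if equality holds, then |X| = |Y| and each of the characteristic vectors v_X and v_Y can be written as c𝟏 + w₊ + w₋ for some c ∈ ℝ and vectors w₊, w₋ ∈ ℝ^N with Aw₊ = ν·w₊ and Aw₋ = −ν·w₋. -/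
open Finset

lemma dotA_symm {N : ℕ} (A : Matrix (Fin N) (Fin N) ℝ) (h : A.IsSymm) (v w : Fin N → ℝ) :
    dotProduct v (A.mulVec w) = dotProduct w (A.mulVec v) := by
  rw [Matrix.dotProduct_mulVec, ← Matrix.mulVec_transpose, h.eq, dotProduct_comm]

lemma sum_sq_add {N : ℕ} (p q : Fin N → ℝ) (c : ℝ) :
    ∑ i, ((p + c • q) i) ^ 2
      = (∑ i, p i ^ 2) + 2 * c * dotProduct p q + c ^ 2 * ∑ i, q i ^ 2 := by
  simp only [Pi.add_apply, Pi.smul_apply, smul_eq_mul, dotProduct]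
  have h : ∀ i, (p i + c * q i) ^ 2 = p i ^ 2 + 2 * c * (p i * q i) + c ^ 2 * q i ^ 2 :=
    fun i => by ring
  simp_rw [h]
  rw [Finset.sum_add_distrib, Finset.sum_add_distrib, ← Finset.mul_sum, ← Finset.mul_sum]

lemma quad_add {N : ℕ} (A : Matrix (Fin N) (Fin N) ℝ) (h : A.IsSymm) (p q : Fin N → ℝ) (c : ℝ) :
    dotProduct (p + c • q) (A.mulVec (p + c • q))
      = dotProduct p (A.mulVec p) + 2 * c * dotProduct p (A.mulVec q)
        + c ^ 2 * dotProduct q (A.mulVec q) := by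
  simp only [Matrix.mulVec_add, Matrix.mulVec_smul, dotProduct_add,
    add_dotProduct, dotProduct_smul, smul_dotProduct, smul_eq_mul]
  rw [dotA_symm A h q p]
  ring

lemma sum_add_smul {N : ℕ} (p q : Fin N → ℝ) (c : ℝ) (hp : ∑ i, p i = 0) (hq : ∑ i, q i = 0) :
    ∑ i, (p + c • q) i = 0 := by
  simp only [Pi.add_apply, Pi.smul_apply, smul_eq_mul]
  rw [Finset.sum_add_distrib, ← Finset.mul_sum, hp, hq]
  ring

lemma quad_aux (d C : ℝ) (hC : 0 ≤ C)
    (h : 0 ≤ 2 * (-d / (C + 1)) * d + (-d / (C + 1)) ^ 2 * C) : d = 0 := by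
  have hC1 : (0:ℝ) < C + 1 := by linarith
  have h5 : 0 ≤ (2 * (-d / (C + 1)) * d + (-d / (C + 1)) ^ 2 * C) * (C + 1) ^ 2 :=
    mul_nonneg h (sq_nonneg _)
  have h6 : (2 * (-d / (C + 1)) * d + (-d / (C + 1)) ^ 2 * C) * (C + 1) ^ 2
      = -(d ^ 2) * (C + 2) := by
    field_simp
    ring
  rw [h6] at h5
  nlinarith [sq_nonneg d, hC1]

lemma eig_lemma {N : ℕ} (ν : ℝ) (A : Matrix (Fin N) (Fin N) ℝ) (hsymm : A.IsSymm)
    (hbound : ∀ v : Fin N → ℝ, (∑ i, v i) = 0 →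
      |dotProduct v (A.mulVec v)| ≤ ν * ∑ i, v i ^ 2)
    (p : Fin N → ℝ) (hp : ∑ i, p i = 0) (hAp : ∑ i, A.mulVec p i = 0)
    (hQ : dotProduct p (A.mulVec p) = ν * ∑ i, p i ^ 2) :
    A.mulVec p = ν • p := by
  have key : ∀ v : Fin N → ℝ, (∑ i, v i) = 0 →
      ν * dotProduct p v - dotProduct p (A.mulVec v) = 0 := by
    intro v hv
    set d := ν * dotProduct p v - dotProduct p (A.mulVec v) with hd
    set C := ν * (∑ i, v i ^ 2) - dotProduct v (A.mulVec v) with hC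
    have hCnn : 0 ≤ C := by
      have h1 := (abs_le.mp (hbound v hv)).2
      simp only [hC]; linarith
    have hC1 : (0:ℝ) < C + 1 := by linarith
    set ε := -d / (C + 1) with hε
    have hs : ∑ i, (p + ε • v) i = 0 := sum_add_smul p v ε hp hv
    have hb := (abs_le.mp (hbound _ hs)).2
    rw [quad_add A hsymm p v ε, sum_sq_add p v ε] at hb
    -- hb : Qp + 2ε B + ε² Qv ≤ ν(Pp + 2ε⟨p,v⟩ + ε²Pv)
    have h3 : 0 ≤ 2 * ε * d + ε ^ 2 * C := by
      rw [hd, hC]; rw [hQ] at hb; ring_nf; ring_nf at hb; nlinarith [hb]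
    rw [hε] at h3
    exact quad_aux d C hCnn h3
  set r : Fin N → ℝ := ν • p - A.mulVec p with hr
  have hrs : ∑ i, r i = 0 := by
    simp only [hr, Pi.sub_apply, Pi.smul_apply, smul_eq_mul]
    rw [Finset.sum_sub_distrib, ← Finset.mul_sum, hp, hAp]; ring
  have hrr : dotProduct r r = 0 := by
    have e1 : dotProduct (A.mulVec p) r = dotProduct p (A.mulVec r) := by
      rw [dotProduct_comm, dotA_symm A hsymm r p]
    have h6 : dotProduct r r
        = ν * dotProduct p r - dotProduct p (A.mulVec r) := by
      conv_lhs => rw [hr]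
      rw [sub_dotProduct, smul_dotProduct, smul_eq_mul, e1]
    rw [h6, key r hrs]
  have hr0 : r = 0 := by
    funext i
    have h7 : ∑ i, r i * r i = 0 := hrr
    have h8 := (Finset.sum_eq_zero_iff_of_nonneg (fun i _ => mul_self_nonneg (r i))).mp h7
    have := h8 i (Finset.mem_univ i)
    exact mul_self_eq_zero.mp this
  have : ν • p - A.mulVec p = 0 := hr0
  rw [sub_eq_zero] at this
  rw [this]

lemma cs_lemma {N : ℕ} (ν : ℝ) (A : Matrix (Fin N) (Fin N) ℝ) (hν : 0 < ν) (hsymm : A.IsSymm)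
    (hbound : ∀ v : Fin N → ℝ, (∑ i, v i) = 0 →
      |dotProduct v (A.mulVec v)| ≤ ν * ∑ i, v i ^ 2)
    (p q : Fin N → ℝ) (hp : ∑ i, p i = 0) (hq : ∑ i, q i = 0) :
    (dotProduct p (A.mulVec q)) ^ 2 ≤ ν ^ 2 * ((∑ i, p i ^ 2) * (∑ i, q i ^ 2)) := by
  set B := dotProduct p (A.mulVec q) with hB
  set P := ∑ i, p i ^ 2 with hP
  set Qs := ∑ i, q i ^ 2 with hQs
  have hgen : ∀ c : ℝ, 2 * (c * B) ≤ ν * (P + c ^ 2 * Qs) := by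
    intro c
    have h1 := (abs_le.mp (hbound _ (sum_add_smul p q c hp hq))).2
    have h2 := (abs_le.mp (hbound _ (sum_add_smul p q (-c) hp hq))).1
    rw [quad_add A hsymm p q c, sum_sq_add p q c] at h1
    rw [quad_add A hsymm p q (-c), sum_sq_add p q (-c)] at h2
    nlinarith [h1, h2]
  by_cases hq0 : Qs = 0
  · have hqz : q = 0 := by
      funext i
      have h8 := (Finset.sum_eq_zero_iff_of_nonneg (fun i _ => sq_nonneg (q i))).mp hq0
      exact pow_eq_zero_iff (n := 2) (by norm_num) |>.mp (h8 i (Finset.mem_univ i))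
    have : B = 0 := by rw [hB, hqz, Matrix.mulVec_zero, dotProduct_zero]
    rw [this, hq0]
    norm_num
  · have hQpos : 0 < Qs := lt_of_le_of_ne (Finset.sum_nonneg fun i _ => sq_nonneg (q i)) (Ne.symm hq0)
    have hPnn : 0 ≤ P := Finset.sum_nonneg fun i _ => sq_nonneg (p i)
    have hd : 0 < ν * Qs := mul_pos hν hQpos
    have h7 := hgen (B / (ν * Qs))
    have h8 : 2 * (B / (ν * Qs) * B) * (ν * Qs) ≤ ν * (P + (B / (ν * Qs)) ^ 2 * Qs) * (ν * Qs) :=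
      mul_le_mul_of_nonneg_right h7 hd.le
    have e1 : 2 * (B / (ν * Qs) * B) * (ν * Qs) = 2 * B ^ 2 := by field_simp
    have e2 : ν * (P + (B / (ν * Qs)) ^ 2 * Qs) * (ν * Qs) = ν ^ 2 * (P * Qs) + B ^ 2 := by
      field_simp
    rw [e1, e2] at h8
    linarith

lemma aux_amgm (a b t : ℝ) (ha0 : 0 ≤ a) (hb0 : 0 ≤ b) (ht0 : 0 ≤ t)
    (ht2 : t ^ 2 = a * b) : 2 * t ≤ a + b := by
  nlinarith [sq_nonneg (a - b), mul_nonneg ht0 (add_nonneg ha0 hb0)]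

lemma aux_tn (n a b t : ℝ) (hn : 0 < n) (ht0 : 0 ≤ t) (ht2 : t ^ 2 = a * b)
    (ha0 : 0 ≤ a) (hb0 : 0 ≤ b) (han : a ≤ n) (hbn : b ≤ n) : t ≤ n := by
  nlinarith [mul_le_mul han hbn hb0 hn.le]

lemma aux_sub (n a b t : ℝ) (hn : 0 < n) (h2t : 2 * t ≤ a + b) (ht2 : t ^ 2 = a * b) :
    (n - a) * (n - b) ≤ (n - t) ^ 2 := by
  nlinarith [mul_le_mul_of_nonneg_left h2t hn.le]

lemma aux_hts (l1 ν n a b t : ℝ) (hl1 : 0 < l1) (hν : 0 < ν) (hn : 0 < n)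
    (ha0 : 0 ≤ a) (hb0 : 0 ≤ b) (htn : t ≤ n)
    (hsub : (n - a) * (n - b) ≤ (n - t) ^ 2)
    (ht0 : 0 ≤ t) (ht2 : t ^ 2 = a * b)
    (hs2 : l1 ^ 2 * (a * b) ^ 2 ≤ ν ^ 2 * (a * b * ((n - a) * (n - b)))) :
    t ≤ ν * n / (l1 + ν) := by
  have hlν : 0 < l1 + ν := by linarith
  rcases eq_or_lt_of_le ht0 with h0 | htpos
  · rw [← h0]; positivity
  · have h10' : ν ^ 2 * (a * b * ((n - a) * (n - b))) ≤ ν ^ 2 * (a * b * (n - t) ^ 2) := by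
      nlinarith [mul_nonneg (mul_nonneg (sq_nonneg ν) (mul_nonneg ha0 hb0))
        (sub_nonneg.mpr hsub)]
    have h10 : l1 ^ 2 * (t ^ 2) ^ 2 ≤ ν ^ 2 * (t ^ 2 * (n - t) ^ 2) := by
      rw [ht2]; nlinarith [hs2, h10']
    have h12 : l1 * t ^ 2 ≤ ν * (t * (n - t)) := by
      nlinarith [h10, mul_nonneg hl1.le (sq_nonneg t),
        mul_nonneg hν.le (mul_nonneg ht0 (sub_nonneg.mpr htn))]
    rw [le_div_iff₀ hlν]
    nlinarith [h12, htpos]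

lemma aux_eqprod (l1 ν n a b t : ℝ) (hν : 0 < ν) (htpos : 0 < t)
    (e3 : l1 ^ 2 * (t ^ 2) ^ 2 = ν ^ 2 * (t ^ 2 * (n - t) ^ 2))
    (hsub : (n - a) * (n - b) ≤ (n - t) ^ 2)
    (hs2t : l1 ^ 2 * (t ^ 2) ^ 2 ≤ ν ^ 2 * (t ^ 2 * ((n - a) * (n - b)))) :
    (n - a) * (n - b) = (n - t) ^ 2 := by
  nlinarith [hs2t, hsub, e3, mul_pos (mul_pos hν hν) (mul_pos htpos htpos)]

lemma aux_force (ν r2 Qx Qy Px Py D B : ℝ)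
    (h1 : -(ν * (Px + 2 * 1 * D + 1 ^ 2 * Py)) ≤ Qx + 2 * 1 * B + 1 ^ 2 * Qy)
    (h2 : Qx + 2 * (-1) * B + (-1) ^ 2 * Qy ≤ ν * (Px + 2 * (-1) * D + (-1) ^ 2 * Py))
    (hB : B = -(ν * r2)) (hPx : Px = r2) (hPy : Py = r2) :
    Qx + 2 * 1 * B + 1 ^ 2 * Qy = -ν * (Px + 2 * 1 * D + 1 ^ 2 * Py) ∧
    Qx + 2 * (-1) * B + (-1) ^ 2 * Qy = ν * (Px + 2 * (-1) * D + (-1) ^ 2 * Py) := by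
  subst hB hPx hPy
  constructor <;> nlinarith [h1, h2]

set_option maxHeartbeats 1000000 in
/-- **Cross-independent weighted version of Hoffman's bound.**
Let `A` be a real symmetric `N × N` matrix whose maximum eigenvalue is `l1 > 0`,
with eigenvector the all-ones vector, and such that the quadratic form of `A` on the
orthogonal complement of the all-ones vector is bounded in modulus by `ν`.
If `X, Y ⊆ [N]` satisfy `A x y = 0` for all `x ∈ X`, `y ∈ Y`, then
`|X||Y| ≤ (ν N/(l1+ν))²`; in case of equality `|X| = |Y|` and the characteristic
vectors of `X` and `Y` each decompose as a constant vector plus a `ν`-eigenvector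
plus a `(-ν)`-eigenvector of `A`. -/
theorem stmt1 (N : ℕ) (hN : 1 ≤ N) (A : Matrix (Fin N) (Fin N) ℝ)
    (hsymm : A.IsSymm) (l1 ν : ℝ) (hl1 : 0 < l1) (hν : 0 < ν)
    (hone : A.mulVec (fun _ => (1 : ℝ)) = fun _ => l1)
    (hmax : ∀ v : Fin N → ℝ, dotProduct v (A.mulVec v) ≤ l1 * ∑ i, v i ^ 2)
    (hbound : ∀ v : Fin N → ℝ, (∑ i, v i) = 0 →
      |dotProduct v (A.mulVec v)| ≤ ν * ∑ i, v i ^ 2)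
    (X Y : Finset (Fin N))
    (hXY : ∀ x ∈ X, ∀ y ∈ Y, A x y = 0) :
    (X.card : ℝ) * Y.card ≤ (ν * N / (l1 + ν)) ^ 2 ∧
    ((X.card : ℝ) * Y.card = (ν * N / (l1 + ν)) ^ 2 →
      X.card = Y.card ∧
      (∃ (c : ℝ) (wp wm : Fin N → ℝ),
        (fun i => if i ∈ X then (1 : ℝ) else 0) = (fun _ => c) + wp + wm ∧
        A.mulVec wp = ν • wp ∧ A.mulVec wm = (-ν) • wm) ∧
      (∃ (c : ℝ) (wp wm : Fin N → ℝ),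
        (fun i => if i ∈ Y then (1 : ℝ) else 0) = (fun _ => c) + wp + wm ∧
        A.mulVec wp = ν • wp ∧ A.mulVec wm = (-ν) • wm)) := by
  set n : ℝ := (N : ℝ) with hn_def
  have hn : 0 < n := by
    rw [hn_def]; exact_mod_cast Nat.lt_of_lt_of_le Nat.zero_lt_one hN
  have hn' : n ≠ 0 := ne_of_gt hn
  set one : Fin N → ℝ := fun _ => (1 : ℝ) with hone_def
  set χX : Fin N → ℝ := fun i => if i ∈ X then (1 : ℝ) else 0 with hχX
  set χY : Fin N → ℝ := fun i => if i ∈ Y then (1 : ℝ) else 0 with hχY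
  set a : ℝ := (X.card : ℝ) with ha_def
  set b : ℝ := (Y.card : ℝ) with hb_def
  have hlν : 0 < l1 + ν := by linarith
  -- basic sums
  have hsumX : ∑ i, χX i = a := by
    rw [hχX, ha_def]; simp [Finset.sum_ite_mem]
  have hsumY : ∑ i, χY i = b := by
    rw [hχY, hb_def]; simp [Finset.sum_ite_mem]
  have hsqX : ∑ i, χX i ^ 2 = a := by
    have h : ∀ i, χX i ^ 2 = χX i := by
      intro i; rw [hχX]; dsimp only; split_ifs <;> norm_num
    simp_rw [h]; exact hsumX
  have hsqY : ∑ i, χY i ^ 2 = b := by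
    have h : ∀ i, χY i ^ 2 = χY i := by
      intro i; rw [hχY]; dsimp only; split_ifs <;> norm_num
    simp_rw [h]; exact hsumY
  have ha0 : 0 ≤ a := by rw [ha_def]; positivity
  have hb0 : 0 ≤ b := by rw [hb_def]; positivity
  have han : a ≤ n := by
    rw [ha_def, hn_def]
    have h := Finset.card_le_univ X
    simp only [Finset.card_univ, Fintype.card_fin] at h
    exact_mod_cast h
  have hbn : b ≤ n := by
    rw [hb_def, hn_def]
    have h := Finset.card_le_univ Y
    simp only [Finset.card_univ, Fintype.card_fin] at h
    exact_mod_cast h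
  -- A on the all-ones vector
  have hAone : A.mulVec one = l1 • one := by
    rw [hone]; funext i; simp [hone_def]
  have hB11 : dotProduct one (A.mulVec one) = l1 * n := by
    rw [hAone]
    simp [dotProduct, hone_def, Finset.sum_const, Finset.card_univ, hn_def, mul_comm]
  have hBX1 : dotProduct χX (A.mulVec one) = l1 * a := by
    rw [hAone]
    have h : ∀ i, χX i * (l1 • one) i = l1 * χX i := by
      intro i; simp [hone_def]; ring
    simp only [dotProduct]
    simp_rw [h]
    rw [← Finset.mul_sum, hsumX]
  have hB1Y : dotProduct one (A.mulVec χY) = l1 * b := by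
    rw [dotA_symm A hsymm one χY, hAone]
    have h : ∀ i, χY i * (l1 • one) i = l1 * χY i := by
      intro i; simp [hone_def]; ring
    simp only [dotProduct]
    simp_rw [h]
    rw [← Finset.mul_sum, hsumY]
  have hBXY : dotProduct χX (A.mulVec χY) = 0 := by
    simp only [dotProduct, Matrix.mulVec, hχX, hχY]
    rw [Finset.sum_eq_zero]
    intro i _
    split_ifs with hi
    · rw [one_mul, Finset.sum_eq_zero]
      intro j _
      split_ifs with hj
      · rw [hXY i hi j hj, zero_mul]
      · rw [mul_zero]
    · rw [zero_mul]
  -- centered vectors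
  set x : Fin N → ℝ := χX - (a / n) • one with hx_def
  set y : Fin N → ℝ := χY - (b / n) • one with hy_def
  have hxi : ∀ i, x i = χX i - a / n := by
    intro i; rw [hx_def]; simp [hone_def]
  have hyi : ∀ i, y i = χY i - b / n := by
    intro i; rw [hy_def]; simp [hone_def]
  have hsx : ∑ i, x i = 0 := by
    simp_rw [hxi]
    rw [Finset.sum_sub_distrib, hsumX, Finset.sum_const, Finset.card_univ, Fintype.card_fin,
      nsmul_eq_mul, ← hn_def]
    field_simp
    ring
  have hsy : ∑ i, y i = 0 := by
    simp_rw [hyi]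
    rw [Finset.sum_sub_distrib, hsumY, Finset.sum_const, Finset.card_univ, Fintype.card_fin,
      nsmul_eq_mul, ← hn_def]
    field_simp
    ring
  have hPx : ∑ i, x i ^ 2 = a - a ^ 2 / n := by
    have h : ∀ i, x i ^ 2 = χX i ^ 2 - 2 * (a / n) * χX i + (a / n) ^ 2 := by
      intro i; rw [hxi]; ring
    simp_rw [h]
    rw [Finset.sum_add_distrib, Finset.sum_sub_distrib, hsqX, ← Finset.mul_sum, hsumX,
      Finset.sum_const, Finset.card_univ, Fintype.card_fin, nsmul_eq_mul, ← hn_def]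
    field_simp
    ring
  have hPy : ∑ i, y i ^ 2 = b - b ^ 2 / n := by
    have h : ∀ i, y i ^ 2 = χY i ^ 2 - 2 * (b / n) * χY i + (b / n) ^ 2 := by
      intro i; rw [hyi]; ring
    simp_rw [h]
    rw [Finset.sum_add_distrib, Finset.sum_sub_distrib, hsqY, ← Finset.mul_sum, hsumY,
      Finset.sum_const, Finset.card_univ, Fintype.card_fin, nsmul_eq_mul, ← hn_def]
    field_simp
    ring
  have hBxy : dotProduct x (A.mulVec y) = -(l1 * a * b / n) := by
    rw [hx_def, hy_def]
    simp only [Matrix.mulVec_sub, Matrix.mulVec_smul, dotProduct_sub,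
      sub_dotProduct, dotProduct_smul, smul_dotProduct, smul_eq_mul]
    rw [hBXY, hBX1, hB1Y, hB11]
    field_simp
    ring
  -- the key squared inequality, multiplied out
  have hkey := cs_lemma ν A hν hsymm hbound x y hsx hsy
  rw [hBxy, hPx, hPy] at hkey
  have hs2 : l1 ^ 2 * (a * b) ^ 2 ≤ ν ^ 2 * (a * b * ((n - a) * (n - b))) := by
    have h8 := mul_le_mul_of_nonneg_right hkey (le_of_lt (mul_pos hn hn))
    have e1 : (-(l1 * a * b / n)) ^ 2 * (n * n) = l1 ^ 2 * (a * b) ^ 2 := by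
      field_simp
    have e2 : ν ^ 2 * ((a - a ^ 2 / n) * (b - b ^ 2 / n)) * (n * n)
        = ν ^ 2 * (a * b * ((n - a) * (n - b))) := by
      field_simp
    rw [e1, e2] at h8
    exact h8
  -- the sqrt of ab
  set t : ℝ := Real.sqrt (a * b) with ht_def
  have ht0 : 0 ≤ t := Real.sqrt_nonneg _
  have ht2 : t ^ 2 = a * b := Real.sq_sqrt (mul_nonneg ha0 hb0)
  have h2t : 2 * t ≤ a + b := aux_amgm a b t ha0 hb0 ht0 ht2
  have htn : t ≤ n := aux_tn n a b t hn ht0 ht2 ha0 hb0 han hbn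
  have hsub : (n - a) * (n - b) ≤ (n - t) ^ 2 := aux_sub n a b t hn h2t ht2
  have hts : t ≤ ν * n / (l1 + ν) :=
    aux_hts l1 ν n a b t hl1 hν hn ha0 hb0 htn hsub ht0 ht2 hs2
  have hmain : a * b ≤ (ν * n / (l1 + ν)) ^ 2 := by
    calc a * b = t ^ 2 := ht2.symm
    _ ≤ (ν * n / (l1 + ν)) ^ 2 := pow_le_pow_left₀ ht0 hts 2
  refine ⟨hmain, ?_⟩
  intro heq
  -- equality case
  have hc0 : 0 < ν * n / (l1 + ν) := by positivity
  have htc : t = ν * n / (l1 + ν) := by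
    rw [ht_def, heq, Real.sqrt_sq hc0.le]
  have htpos : 0 < t := htc ▸ hc0
  have hl1t : l1 * t = ν * (n - t) := by
    rw [htc]; field_simp; ring
  have e0 : (l1 * t) ^ 2 = (ν * (n - t)) ^ 2 := by rw [hl1t]
  have e3 : l1 ^ 2 * (t ^ 2) ^ 2 = ν ^ 2 * (t ^ 2 * (n - t) ^ 2) := by
    linear_combination t ^ 2 * e0
  rw [← ht2] at hs2
  have heqprod : (n - a) * (n - b) = (n - t) ^ 2 :=
    aux_eqprod l1 ν n a b t hν htpos e3 hsub hs2
  have hab_sum : a + b = 2 * t := by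
    have h14 : n * (a + b) = n * (2 * t) := by linear_combination (-1 : ℝ) * heqprod - ht2
    exact mul_left_cancel₀ hn' h14
  have hab_eq : a = b := by
    have h15 : (a - b) ^ 2 = 0 := by linear_combination (a + b + 2 * t) * hab_sum + 4 * ht2
    have h16 := pow_eq_zero_iff (n := 2) (by norm_num) |>.mp h15
    linarith [sub_eq_zero.mp h16]
  have hat : a = t := by linarith
  have hbt : b = t := by linarith
  have hcard : X.card = Y.card := by
    have h17 : (X.card : ℝ) = (Y.card : ℝ) := by rw [← ha_def, ← hb_def]; exact hab_eq
    exact_mod_cast h17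
  -- equality in the CS chain
  set r2 : ℝ := t * (n - t) / n with hr2_def
  have hPx' : ∑ i, x i ^ 2 = r2 := by
    rw [hPx, hat, hr2_def]; field_simp
  have hPy' : ∑ i, y i ^ 2 = r2 := by
    rw [hPy, hbt, hr2_def]; field_simp
  have hBxy' : dotProduct x (A.mulVec y) = -(ν * r2) := by
    rw [hBxy, hat, hbt, hr2_def,
      show l1 * t * t = ν * (t * (n - t)) from by linear_combination t * hl1t]
    ring
  -- sums of x ± y
  have hspm : ∑ i, (x + (1 : ℝ) • y) i = 0 := sum_add_smul x y 1 hsx hsy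
  have hsmm : ∑ i, (x + (-1 : ℝ) • y) i = 0 := sum_add_smul x y (-1) hsx hsy
  have h1 := (abs_le.mp (hbound _ hspm)).1
  have h2 := (abs_le.mp (hbound _ hsmm)).2
  rw [quad_add A hsymm x y 1, sum_sq_add x y 1] at h1
  rw [quad_add A hsymm x y (-1), sum_sq_add x y (-1)] at h2
  have hforce := aux_force ν r2 (dotProduct x (A.mulVec x))
    (dotProduct y (A.mulVec y)) (∑ i, x i ^ 2) (∑ i, y i ^ 2)
    (dotProduct x y) (dotProduct x (A.mulVec y)) h1 h2 hBxy' hPx' hPy'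
  have hQp : dotProduct (x + (1 : ℝ) • y) (A.mulVec (x + (1 : ℝ) • y))
      = -ν * ∑ i, ((x + (1 : ℝ) • y) i) ^ 2 := by
    rw [quad_add A hsymm x y 1, sum_sq_add x y 1]
    exact hforce.1
  have hQm : dotProduct (x + (-1 : ℝ) • y) (A.mulVec (x + (-1 : ℝ) • y))
      = ν * ∑ i, ((x + (-1 : ℝ) • y) i) ^ 2 := by
    rw [quad_add A hsymm x y (-1), sum_sq_add x y (-1)]
    exact hforce.2
  -- eigenvector conclusions
  have hAsum : ∀ w : Fin N → ℝ, (∑ i, w i) = 0 → ∑ i, A.mulVec w i = 0 := by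
    intro w hw
    have e4 : ∑ i, A.mulVec w i = dotProduct one (A.mulVec w) := by
      simp [dotProduct, hone_def]
    rw [e4, dotA_symm A hsymm one w, hAone]
    have e5 : ∀ i, w i * (l1 • one) i = l1 * w i := by
      intro i; simp [hone_def]; ring
    simp only [dotProduct]
    simp_rw [e5]
    rw [← Finset.mul_sum, hw, mul_zero]
  have heig_p : A.mulVec (x + (-1 : ℝ) • y) = ν • (x + (-1 : ℝ) • y) :=
    eig_lemma ν A hsymm hbound _ hsmm (hAsum _ hsmm) hQm
  have heig_m : A.mulVec (x + (1 : ℝ) • y) = (-ν) • (x + (1 : ℝ) • y) := by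
    have hsymmN : (-A).IsSymm := by
      simp [Matrix.IsSymm, Matrix.transpose_neg, hsymm.eq]
    have hboundN : ∀ v : Fin N → ℝ, (∑ i, v i) = 0 →
        |dotProduct v ((-A).mulVec v)| ≤ ν * ∑ i, v i ^ 2 := by
      intro v hv
      rw [Matrix.neg_mulVec, dotProduct_neg, abs_neg]
      exact hbound v hv
    have hApN : ∑ i, (-A).mulVec (x + (1 : ℝ) • y) i = 0 := by
      rw [Matrix.neg_mulVec]
      simp only [Pi.neg_apply]
      rw [Finset.sum_neg_distrib, hAsum _ hspm, neg_zero]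
    have hQN : dotProduct (x + (1 : ℝ) • y) ((-A).mulVec (x + (1 : ℝ) • y))
        = ν * ∑ i, ((x + (1 : ℝ) • y) i) ^ 2 := by
      rw [Matrix.neg_mulVec, dotProduct_neg, hQp]
      ring
    have h16 := eig_lemma ν (-A) hsymmN hboundN _ hspm hApN hQN
    rw [Matrix.neg_mulVec, neg_eq_iff_eq_neg] at h16
    rw [h16, ← neg_smul]
  refine ⟨hcard, ?_, ?_⟩
  · refine ⟨a / n, (1 / 2 : ℝ) • (x + (-1 : ℝ) • y), (1 / 2 : ℝ) • (x + (1 : ℝ) • y), ?_, ?_, ?_⟩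
    · funext i
      have e := hxi i
      have f := hyi i
      simp only [Pi.add_apply, Pi.smul_apply, smul_eq_mul]
      linarith [e, f]
    · rw [Matrix.mulVec_smul, heig_p, smul_comm]
    · rw [Matrix.mulVec_smul, heig_m, smul_comm]
  · refine ⟨b / n, (-(1 / 2) : ℝ) • (x + (-1 : ℝ) • y), (1 / 2 : ℝ) • (x + (1 : ℝ) • y), ?_, ?_, ?_⟩
    · funext i
      have e := hxi i
      have f := hyi i
      simp only [Pi.add_apply, Pi.smul_apply, smul_eq_mul]
      linarith [e, f]
    · rw [Matrix.mulVec_smul, heig_p, smul_comm]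
    · rw [Matrix.mulVec_smul, heig_m, smul_comm]
end

section
/- Let N ≥ 1, let A be a real symmetric N×N matrix, and let λ₁ > 0 and λ_N < 0 be real numbers such that the all-ones vector 𝟏 ∈ ℝ^N satisfies A𝟏 = λ₁𝟏 and every v ∈ ℝ^N satisfies λ_N‖v‖₂² ≤ vᵀAv ≤ λ₁‖v‖₂² (standard Euclidean norm). Let λ_M be a real number with λ_N < λ_M ≤ 0 such that every vector v ∈ ℝ^N which is orthogonal (standard inner product) both to 𝟏 and to every w with Aw = λ_N w satisfies vᵀAv ≥ λ_M‖v‖₂². Let X ⊆ [N] with A_{x,y} = 0 for all x, y ∈ X, and set α = |X|/N. Let U ⊆ ℝ^N be the direct sum of the span of 𝟏 and the λ_N-eigenspace {w : Aw = λ_N w}, and let D = ‖P_{U^⊥}(v_X)‖ be the distance from the characteristic vector v_X of X to U in the norm ‖x‖ = √((1/N)·Σ_{i=1}^N x_i²). Then D² ≤ α·((1−α)|λ_N| − λ₁α)/(|λ_N| − |λ_M|). -/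
/-- **Stability version of Hoffman's bound.**
With `A`, `X` as in the weighted Hoffman bound (maximum eigenvalue `l1` with
the all-ones eigenvector, minimum eigenvalue `lN`, and `lM` the negative eigenvalue of
second largest modulus, i.e. the quadratic form on the orthogonal complement of the span
of the all-ones vector and of the `lN`-eigenspace is at least `lM`-times the norm squared),
with `α = |X|/N`, the squared distance `D²` (w.r.t. the normalised norm
`‖x‖² = (1/N)·∑ xᵢ²`) from the characteristic vector of `X` to the subspace `U`
spanned by the constants and the `lN`-eigenspace satisfies
`D² ≤ α((1-α)|lN| - l1·α)/(|lN| - |lM|)`. -/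
theorem stmt2 (N : ℕ) (hN : 1 ≤ N) (A : Matrix (Fin N) (Fin N) ℝ)
    (hsymm : A.IsSymm) (l1 lN lM : ℝ) (hl1 : 0 < l1) (hlN : lN < 0)
    (hlM1 : lN < lM) (hlM2 : lM ≤ 0)
    (hone : A.mulVec (fun _ => (1 : ℝ)) = fun _ => l1)
    (hmax : ∀ v : Fin N → ℝ, dotProduct v (A.mulVec v) ≤ l1 * ∑ i, v i ^ 2)
    (hmin : ∀ v : Fin N → ℝ, lN * ∑ i, v i ^ 2 ≤ dotProduct v (A.mulVec v))
    (hM : ∀ v : Fin N → ℝ, (∑ i, v i) = 0 →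
      (∀ w : Fin N → ℝ, A.mulVec w = lN • w → dotProduct v w = 0) →
      lM * ∑ i, v i ^ 2 ≤ dotProduct v (A.mulVec v))
    (X : Finset (Fin N))
    (hX : ∀ x ∈ X, ∀ y ∈ X, A x y = 0)
    (α : ℝ) (hα : α = (X.card : ℝ) / N)
    (U : Submodule ℝ (Fin N → ℝ))
    (hU : U = Submodule.span ℝ {(fun _ => (1 : ℝ) : Fin N → ℝ)} ⊔
      Module.End.eigenspace (Matrix.mulVecLin A) lN)
    -- `u` is the orthogonal projection of the characteristic vector of `X` onto `U`:
    (u : Fin N → ℝ) (hu : u ∈ U)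
    (horth : ∀ w ∈ U,
      dotProduct ((fun i => if i ∈ X then (1 : ℝ) else 0) - u) w = 0)
    (D : ℝ) (hD0 : 0 ≤ D)
    (hD : D ^ 2 = (1 / N) * ∑ i, ((if i ∈ X then (1 : ℝ) else 0) - u i) ^ 2) :
    D ^ 2 ≤ α * ((1 - α) * |lN| - l1 * α) / (|lN| - |lM|) := by
  set one : Fin N → ℝ := fun _ => (1 : ℝ) with hone_def
  set v : Fin N → ℝ := fun i => if i ∈ X then (1 : ℝ) else 0 with hv_def
  have huU : u ∈ U := hu
  have hsym : ∀ x y : Fin N → ℝ,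
      dotProduct x (A.mulVec y) = dotProduct y (A.mulVec x) := by
    intro x y
    rw [Matrix.dotProduct_mulVec, ← Matrix.mulVec_transpose, hsymm, dotProduct_comm]
  have hAone : A.mulVec one = l1 • one := by
    rw [hone_def, hone]; funext i; simp
  rw [hU] at hu
  obtain ⟨a, ha, w, hw, hau⟩ := Submodule.mem_sup.mp hu
  obtain ⟨c, rfl⟩ := Submodule.mem_span_singleton.mp ha
  have hAw : A.mulVec w = lN • w := by
    have := Module.End.mem_eigenspace_iff.mp hw
    simpa [Matrix.mulVecLin_apply] using this
  have hone_mem : one ∈ U := by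
    rw [hU]; exact Submodule.mem_sup_left (Submodule.mem_span_singleton_self _)
  have hw_mem : w ∈ U := by rw [hU]; exact Submodule.mem_sup_right hw
  have hNpos : (0 : ℝ) < (N : ℝ) := by
    have : (0 : ℕ) < N := Nat.lt_of_lt_of_le Nat.zero_lt_one hN
    exact_mod_cast this
  have h11 : dotProduct one one = (N : ℝ) := by
    simp [dotProduct, hone_def]
  -- one ⊥ w
  have h1w : dotProduct one w = 0 := by
    have h1 : dotProduct one (A.mulVec w) = lN * dotProduct one w := by
      rw [hAw, dotProduct_smul, smul_eq_mul]
    have h2 : dotProduct one (A.mulVec w) = l1 * dotProduct one w := by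
      rw [hsym, hAone, dotProduct_smul, smul_eq_mul, dotProduct_comm]
    have h3 : (l1 - lN) * dotProduct one w = 0 := by linarith
    rcases mul_eq_zero.mp h3 with h | h
    · linarith
    · exact h
  have hw1 : dotProduct w one = 0 := by rw [dotProduct_comm]; exact h1w
  -- z := v - u is orthogonal to U
  set z : Fin N → ℝ := v - u with hz_def
  have hzU : ∀ w' ∈ U, dotProduct z w' = 0 := horth
  have hz1 : dotProduct z one = 0 := hzU one hone_mem
  have h1z : dotProduct one z = 0 := by rw [dotProduct_comm]; exact hz1
  have hzw : dotProduct z w = 0 := hzU w hw_mem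
  have hwz : dotProduct w z = 0 := by rw [dotProduct_comm]; exact hzw
  -- basic dot products with the characteristic vector
  have hvv : dotProduct v v = (X.card : ℝ) := by
    rw [hv_def]
    unfold dotProduct
    rw [Finset.sum_congr rfl fun i _ =>
      (by by_cases h : i ∈ X <;> simp [h] :
        (if i ∈ X then (1:ℝ) else 0) * (if i ∈ X then (1:ℝ) else 0)
          = if i ∈ X then (1:ℝ) else 0)]
    rw [Finset.sum_ite_mem, Finset.univ_inter, Finset.sum_const, nsmul_eq_mul, mul_one]
  have hv1 : dotProduct v one = (X.card : ℝ) := by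
    rw [hv_def, hone_def]
    unfold dotProduct
    simp only [mul_one]
    rw [Finset.sum_ite_mem, Finset.univ_inter, Finset.sum_const, nsmul_eq_mul, mul_one]
  have hvAv : dotProduct v (A.mulVec v) = 0 := by
    unfold dotProduct Matrix.mulVec
    rw [hv_def]
    apply Finset.sum_eq_zero
    intro i _
    by_cases hi : i ∈ X
    · simp only [hi, if_true, one_mul]
      unfold dotProduct
      apply Finset.sum_eq_zero
      intro j _
      by_cases hj : j ∈ X
      · simp [hj, hX i hi j hj]
      · simp [hj]
    · simp [hi]
  set Sw : ℝ := ∑ i, w i ^ 2 with hSw_def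
  set Zz : ℝ := ∑ i, z i ^ 2 with hZz_def
  have hww : dotProduct w w = Sw := by
    rw [hSw_def]; unfold dotProduct; exact Finset.sum_congr rfl fun i _ => (sq (w i)).symm
  have hzz : dotProduct z z = Zz := by
    rw [hZz_def]; unfold dotProduct; exact Finset.sum_congr rfl fun i _ => (sq (z i)).symm
  have hZz0 : 0 ≤ Zz := Finset.sum_nonneg fun i _ => sq_nonneg _
  have hvuz : v = (c • one + w) + z := by rw [hz_def, hau]; ring
  -- E3 : c * N = |X|
  have hE3 : c * (N : ℝ) = (X.card : ℝ) := by
    have h := hv1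
    rw [hvuz] at h
    simp only [add_dotProduct, smul_dotProduct, smul_eq_mul,
      h11, hw1, hz1] at h
    linarith
  -- E2 : |X| = c² N + Sw + Zz
  have hE2 : (X.card : ℝ) = c ^ 2 * (N : ℝ) + Sw + Zz := by
    have h := hvv
    rw [hvuz] at h
    simp only [add_dotProduct, dotProduct_add, smul_dotProduct,
      dotProduct_smul, smul_eq_mul, h11, h1w, hw1, hww, h1z, hz1, hwz, hzw, hzz] at h
    linear_combination -h
  -- values of the quadratic form
  have h1Az : dotProduct one (A.mulVec z) = 0 := by
    rw [hsym, hAone, dotProduct_smul, hz1, smul_zero]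
  have hwAz : dotProduct w (A.mulVec z) = 0 := by
    rw [hsym, hAw, dotProduct_smul, hzw, smul_zero]
  have hzAone : dotProduct z (A.mulVec one) = 0 := by
    rw [hAone, dotProduct_smul, hz1, smul_zero]
  have hzAw : dotProduct z (A.mulVec w) = 0 := by
    rw [hAw, dotProduct_smul, hzw, smul_zero]
  have h1A1 : dotProduct one (A.mulVec one) = l1 * (N : ℝ) := by
    rw [hAone, dotProduct_smul, h11, smul_eq_mul]
  have h1Aw : dotProduct one (A.mulVec w) = 0 := by
    rw [hAw, dotProduct_smul, h1w, smul_zero]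
  have hwA1 : dotProduct w (A.mulVec one) = 0 := by
    rw [hAone, dotProduct_smul, hw1, smul_zero]
  have hwAw : dotProduct w (A.mulVec w) = lN * Sw := by
    rw [hAw, dotProduct_smul, hww, smul_eq_mul]
  -- E1 : 0 = c² l1 N + lN Sw + zᵀAz
  have hAv2 : A.mulVec ((c • one + w) + z) = (c * l1) • one + lN • w + A.mulVec z := by
    rw [Matrix.mulVec_add, Matrix.mulVec_add, Matrix.mulVec_smul, hAone, hAw, smul_smul]
  have hE1 : 0 = c ^ 2 * l1 * (N : ℝ) + lN * Sw + dotProduct z (A.mulVec z) := by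
    have h := hvAv
    rw [hvuz, hAv2] at h
    simp only [add_dotProduct, dotProduct_add, smul_dotProduct,
      dotProduct_smul, smul_eq_mul, h11, h1w, hw1, hww, h1z, hz1, hwz, hzw,
      h1Az, hwAz] at h
    linear_combination -h
  -- E4 : the quadratic form lower bound on z
  have hzsum : (∑ i, z i) = 0 := by
    have h := hz1
    unfold dotProduct at h
    simpa [hone_def] using h
  have hzperp : ∀ w' : Fin N → ℝ, A.mulVec w' = lN • w' → dotProduct z w' = 0 := by
    intro w' hw'
    apply hzU
    rw [hU]
    exact Submodule.mem_sup_right (Module.End.mem_eigenspace_iff.mpr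
      (by simpa [Matrix.mulVecLin_apply] using hw'))
  have hE4 : lM * Zz ≤ dotProduct z (A.mulVec z) := hM z hzsum hzperp
  have hDZ : D ^ 2 = Zz / (N : ℝ) := by
    rw [hD, hZz_def]
    have hss : (∑ i, ((if i ∈ X then (1:ℝ) else 0) - u i) ^ 2) = ∑ i, z i ^ 2 :=
      Finset.sum_congr rfl fun i _ => rfl
    rw [hss]; ring
  have hQ : lM * Zz ≤ -(c ^ 2 * l1 * (N : ℝ)) - lN * Sw := by linarith only [hE1, hE4]
  have hSw_eq : Sw = c * (N : ℝ) - c ^ 2 * (N : ℝ) - Zz := by linarith only [hE2, hE3]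
  clear_value Sw Zz
  rw [hSw_eq] at hQ
  -- main inequality
  have hmain : (lM - lN) * Zz ≤ (N : ℝ) * (c * ((1 - c) * (-lN) - l1 * c)) := by
    nlinarith only [hQ]
  have hαc : α = c := by
    rw [hα, ← hE3, mul_div_assoc, div_self (ne_of_gt hNpos), mul_one]
  have habsN : |lN| = -lN := abs_of_neg hlN
  have habsM : |lM| = -lM := abs_of_nonpos hlM2
  rw [hDZ, hαc, habsN, habsM,
    div_le_div_iff₀ hNpos (by linarith : (0:ℝ) < -lN - -lM)]
  nlinarith only [hmain]
end

section
/- Let n ≥ 2, let 0 < γ < 1, and let X ⊆ S_n with |X| ≥ γ·n!. Set h₀ = √((n−1)·log(1/γ)/2). Then for any real h ≥ h₀, the h-neighbourhood N_h(X) := {π ∈ S_n : there exists σ ∈ X such that σ⁻¹π can be written as a product of at most h transpositions} satisfies |N_h(X)| ≥ (1 − e^{−2(h−h₀)²/(n−1)})·n!. -/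
section Stmt9Aux

open Equiv Finset Real

lemma hoeffding_pt {p : ℝ} (hp0 : 0 ≤ p) (hp1 : p ≤ 1) (t : ℝ) :
    (1 - p) + p * Real.exp t ≤ Real.exp (p * t + t ^ 2 / 8) := by
  have hD : ∀ s : ℝ, (0:ℝ) < 1 - p + p * Real.exp s := by
    intro s
    rcases lt_or_eq_of_le hp1 with h | h
    · have : 0 ≤ p * Real.exp s := mul_nonneg hp0 (Real.exp_pos s).le
      linarith
    · have : 0 < p * Real.exp s := by
        rw [h]; positivity
      linarith
  set φ : ℝ → ℝ := fun s => Real.log (1 - p + p * Real.exp s) with hφ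
  have hden : ∀ s : ℝ, HasDerivAt (fun s => 1 - p + p * Real.exp s) (p * Real.exp s) s := by
    intro s
    simpa using ((Real.hasDerivAt_exp s).const_mul p).const_add (1 - p)
  have hφ' : ∀ s : ℝ, HasDerivAt φ (p * Real.exp s / (1 - p + p * Real.exp s)) s := by
    intro s; exact (hden s).log (ne_of_gt (hD s))
  set G : ℝ → ℝ := fun s => p + s / 4 - p * Real.exp s / (1 - p + p * Real.exp s) with hG
  have hG' : ∀ s : ℝ, HasDerivAt G
      (1 / 4 - p * Real.exp s * (1 - p) / (1 - p + p * Real.exp s) ^ 2) s := by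
    intro s
    have h1 : HasDerivAt (fun s : ℝ => p * Real.exp s) (p * Real.exp s) s :=
      (Real.hasDerivAt_exp s).const_mul p
    have h2 : HasDerivAt (fun s : ℝ => p * Real.exp s / (1 - p + p * Real.exp s))
        ((p * Real.exp s * (1 - p + p * Real.exp s) - p * Real.exp s * (p * Real.exp s)) /
          (1 - p + p * Real.exp s) ^ 2) s := h1.div (hden s) (ne_of_gt (hD s))
    have h3 : HasDerivAt (fun s : ℝ => p + s / 4) (1 / 4) s := by
      simpa using ((hasDerivAt_id s).div_const 4).const_add p
    have := h3.sub h2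
    exact this.congr_deriv (by ring)
  have hGmono : Monotone G := by
    apply monotone_of_deriv_nonneg
    · intro s; exact (hG' s).differentiableAt
    · intro s
      rw [(hG' s).deriv]
      have hd := hD s
      have he := (Real.exp_pos s).le
      have key : 4 * (p * Real.exp s * (1 - p)) ≤ (1 - p + p * Real.exp s) ^ 2 := by
        nlinarith [sq_nonneg ((1 - p) - p * Real.exp s)]
      rw [sub_nonneg, div_le_div_iff₀ (by positivity) (by norm_num : (0:ℝ) < 4)]
      linarith
  have hG0 : G 0 = 0 := by
    simp only [hG]
    rw [Real.exp_zero]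
    field_simp
    ring
  set F : ℝ → ℝ := fun s => p * s + s ^ 2 / 8 - φ s with hF
  have hF' : ∀ s : ℝ, HasDerivAt F (G s) s := by
    intro s
    have h1 : HasDerivAt (fun s : ℝ => p * s + s ^ 2 / 8) (p + s / 4) s := by
      have := ((hasDerivAt_pow 2 s).div_const 8).const_add (p * s)
      have h2 : HasDerivAt (fun u : ℝ => p * u) p s := by
        simpa using (hasDerivAt_id s).const_mul p
      exact (h2.add ((hasDerivAt_pow 2 s).div_const 8)).congr_deriv (by norm_num; ring)
    have := h1.sub (hφ' s)
    exact this
  have hF0 : F 0 = 0 := by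
    simp only [hF, hφ]
    rw [Real.exp_zero]
    norm_num
  have hFnonneg : ∀ s : ℝ, 0 ≤ F s := by
    intro s
    rcases lt_trichotomy s 0 with hs | hs | hs
    · obtain ⟨c, hc, hceq⟩ := exists_hasDerivAt_eq_slope F G hs
        (fun x _ => (hF' x).differentiableAt.continuousAt.continuousWithinAt)
        (fun x _ => hF' x)
      have hGc : G c ≤ 0 := hG0 ▸ hGmono hc.2.le
      have : (F 0 - F s) / (0 - s) ≤ 0 := hceq ▸ hGc
      rw [hF0] at this
      rw [div_nonpos_iff] at this
      rcases this with ⟨_, hb⟩ | ⟨ha, _⟩ <;> linarith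
    · rw [hs, hF0]
    · obtain ⟨c, hc, hceq⟩ := exists_hasDerivAt_eq_slope F G hs
        (fun x _ => (hF' x).differentiableAt.continuousAt.continuousWithinAt)
        (fun x _ => hF' x)
      have hGc : 0 ≤ G c := hG0 ▸ hGmono hc.1.le
      have : 0 ≤ (F s - F 0) / (s - 0) := hceq ▸ hGc
      rw [hF0] at this
      rw [div_nonneg_iff] at this
      rcases this with ⟨ha, _⟩ | ⟨_, hb⟩ <;> linarith
  have := hFnonneg t
  have hlog : φ t ≤ p * t + t ^ 2 / 8 := by simp only [hF] at this; linarith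
  calc (1 - p) + p * Real.exp t = Real.exp (φ t) := (Real.exp_log (hD t)).symm
    _ ≤ Real.exp (p * t + t ^ 2 / 8) := Real.exp_le_exp.2 hlog

lemma hoeffding_discrete {ι : Type*} [Fintype ι] [Nonempty ι] (x : ι → ℝ) (a t : ℝ)
    (h1 : ∀ i, a ≤ x i) (h2 : ∀ i, x i ≤ a + 1) :
    ∑ i, Real.exp (t * x i) ≤
      (Fintype.card ι : ℝ) * Real.exp (t * ((∑ i, x i) / (Fintype.card ι : ℝ)) + t ^ 2 / 8) := by
  have hN : (0:ℝ) < (Fintype.card ι : ℝ) := by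
    exact_mod_cast Fintype.card_pos
  set N : ℝ := (Fintype.card ι : ℝ) with hNdef
  set μ : ℝ := (∑ i, x i) / N with hμ
  have hsum_ge : N * a ≤ ∑ i, x i := by
    calc N * a = ∑ _i : ι, a := by rw [Finset.sum_const, card_univ]; ring
      _ ≤ ∑ i, x i := Finset.sum_le_sum fun i _ => h1 i
  have hsum_le : ∑ i, x i ≤ N * (a + 1) := by
    calc ∑ i, x i ≤ ∑ _i : ι, (a + 1) := Finset.sum_le_sum fun i _ => h2 i
      _ = N * (a + 1) := by rw [Finset.sum_const, card_univ]; ring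
  set p : ℝ := μ - a with hp
  have hp0 : 0 ≤ p := by
    rw [hp, hμ, sub_nonneg, le_div_iff₀ hN]
    linarith
  have hp1 : p ≤ 1 := by
    rw [hp, hμ, sub_le_iff_le_add, div_le_iff₀ hN]
    linarith
  have chord : ∀ i, Real.exp (t * x i) ≤
      (a + 1 - x i) * Real.exp (t * a) + (x i - a) * Real.exp (t * (a + 1)) := by
    intro i
    have hw1 : (0:ℝ) ≤ a + 1 - x i := by linarith [h2 i]
    have hw2 : (0:ℝ) ≤ x i - a := by linarith [h1 i]
    have hsum : (a + 1 - x i) + (x i - a) = 1 := by ring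
    have := convexOn_exp.2 (Set.mem_univ (t * a)) (Set.mem_univ (t * (a + 1))) hw1 hw2 hsum
    simp only [smul_eq_mul] at this
    rw [show t * x i = (a + 1 - x i) * (t * a) + (x i - a) * (t * (a + 1)) by ring]
    exact this
  calc ∑ i, Real.exp (t * x i)
      ≤ ∑ i, ((a + 1 - x i) * Real.exp (t * a) + (x i - a) * Real.exp (t * (a + 1))) :=
        Finset.sum_le_sum fun i _ => chord i
    _ = N * ((1 - p) * Real.exp (t * a) + p * Real.exp (t * (a + 1))) := by
        rw [Finset.sum_add_distrib, ← Finset.sum_mul, ← Finset.sum_mul]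
        have e1 : ∑ i, (a + 1 - x i) = N * (a + 1) - ∑ i, x i := by
          rw [Finset.sum_sub_distrib, Finset.sum_const, card_univ]; ring
        have e2 : ∑ i, (x i - a) = (∑ i, x i) - N * a := by
          rw [Finset.sum_sub_distrib, Finset.sum_const, card_univ]; ring
        rw [e1, e2]
        have : ∑ i, x i = N * μ := by rw [hμ]; field_simp
        rw [this, hp]
        ring
    _ ≤ N * Real.exp (t * μ + t ^ 2 / 8) := by
        apply mul_le_mul_of_nonneg_left _ hN.le
        have key : (1 - p) + p * Real.exp t ≤ Real.exp (p * t + t ^ 2 / 8) :=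
          hoeffding_pt hp0 hp1 t
        have expand : (1 - p) * Real.exp (t * a) + p * Real.exp (t * (a + 1))
            = Real.exp (t * a) * ((1 - p) + p * Real.exp t) := by
          rw [show t * (a + 1) = t * a + t by ring, Real.exp_add]
          ring
        rw [expand]
        calc Real.exp (t * a) * ((1 - p) + p * Real.exp t)
            ≤ Real.exp (t * a) * Real.exp (p * t + t ^ 2 / 8) :=
              mul_le_mul_of_nonneg_left key (Real.exp_pos _).le
          _ = Real.exp (t * μ + t ^ 2 / 8) := by
              rw [← Real.exp_add]
              congr 1
              rw [hp]
              ring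

lemma conj_isSwap {α : Type*} [DecidableEq α] (pr g : Equiv.Perm α) (hg : g.IsSwap) :
    (pr * g * pr⁻¹).IsSwap := by
  obtain ⟨a, b, hab, rfl⟩ := hg
  exact ⟨pr a, pr b, fun h => hab (pr.injective h), (Equiv.swap_apply_apply pr a b).symm⟩

lemma optionCongr_isSwap {β : Type*} [DecidableEq β] (g : Equiv.Perm β) (hg : g.IsSwap) :
    Equiv.Perm.IsSwap (Equiv.optionCongr g) := by
  obtain ⟨x, y, hxy, rfl⟩ := hg
  exact ⟨some x, some y, by simpa using hxy, by rw [Equiv.optionCongr_swap]⟩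

lemma optionCongr_mul {β : Type*} (g ρ : Equiv.Perm β) :
    Equiv.optionCongr (g * ρ) = Equiv.optionCongr g * Equiv.optionCongr ρ := by
  rw [Equiv.Perm.mul_def, Equiv.optionCongr_trans]; rfl

-- swap c a * swap a b = swap a b * swap c b  (c ∉ {a,b})
lemma swap_shift {α : Type*} [DecidableEq α] {a b c : α} (hca : c ≠ a) (hcb : c ≠ b) :
    Equiv.swap c a * Equiv.swap a b = Equiv.swap a b * Equiv.swap c b := by
  have h1 := Equiv.swap_apply_apply (Equiv.swap a b) c b
  rw [Equiv.swap_apply_right, Equiv.swap_apply_of_ne_of_ne hca hcb] at h1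
  rw [h1, Equiv.swap_inv, mul_assoc, mul_assoc, Equiv.swap_mul_self, mul_one]

lemma maurey_step (m : ℕ) (hm : 1 ≤ m) (β : Type) [DecidableEq β] [Fintype β]
    (hcardβ : Fintype.card β = m)
    (IH : ∀ (F : Equiv.Perm β → ℝ),
      (∀ g : Equiv.Perm β, g.IsSwap → ∀ pr, F (g * pr) ≤ F pr + 1) → ∀ t : ℝ,
      ∑ pr : Equiv.Perm β, Real.exp (t * F pr) ≤
        (m.factorial : ℝ) * Real.exp (t * ((∑ pr : Equiv.Perm β, F pr) / (m.factorial : ℝ))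
          + t ^ 2 * ((m - 1 : ℕ) : ℝ) / 8))
    (f : Equiv.Perm (Option β) → ℝ)
    (hf : ∀ g : Equiv.Perm (Option β), g.IsSwap → ∀ pr, f (g * pr) ≤ f pr + 1) (t : ℝ) :
    ∑ pr : Equiv.Perm (Option β), Real.exp (t * f pr) ≤
      ((m + 1).factorial : ℝ) *
        Real.exp (t * ((∑ pr : Equiv.Perm (Option β), f pr) / ((m + 1).factorial : ℝ))
          + t ^ 2 * ((m + 1 - 1 : ℕ) : ℝ) / 8) := by
  have hmf : (0:ℝ) < (m.factorial : ℝ) := by exact_mod_cast m.factorial_pos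
  set fJ : Option β → Equiv.Perm β → ℝ :=
    fun J ρ => f (Equiv.swap none J * ρ.optionCongr) with hfJdef
  have hdecomp : ∀ (g : Equiv.Perm (Option β) → ℝ),
      ∑ pr : Equiv.Perm (Option β), g pr
        = ∑ J : Option β, ∑ ρ : Equiv.Perm β, g (Equiv.swap none J * ρ.optionCongr) := by
    intro g
    rw [← Equiv.sum_comp (Equiv.Perm.decomposeOption (α := β)).symm g, Fintype.sum_prod_type]
    apply Finset.sum_congr rfl; intro J _
    apply Finset.sum_congr rfl; intro ρ _
    congr 1
  -- Lipschitz property of each fiber function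
  have hfJ : ∀ J, ∀ g : Equiv.Perm β, g.IsSwap → ∀ ρ, fJ J (g * ρ) ≤ fJ J ρ + 1 := by
    intro J g hg ρ
    have h1 : Equiv.swap (none : Option β) J * (g * ρ).optionCongr
        = (Equiv.swap none J * g.optionCongr * (Equiv.swap none J)⁻¹) *
          (Equiv.swap none J * ρ.optionCongr) := by
      rw [optionCongr_mul]; group
    show f (Equiv.swap none J * (g * ρ).optionCongr) ≤ f (Equiv.swap none J * ρ.optionCongr) + 1
    rw [h1]
    exact hf _ (conj_isSwap _ _ (optionCongr_isSwap g hg)) _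
  -- comparison between fibers
  have hcomp : ∀ J K : Option β,
      (∑ ρ : Equiv.Perm β, fJ J ρ) ≤ (∑ ρ : Equiv.Perm β, fJ K ρ) + (m.factorial : ℝ) := by
    have key : ∀ J K : Option β, ∃ c : Equiv.Perm β, ∀ ρ, fJ J (c * ρ) ≤ fJ K ρ + 1 := by
      intro J K
      match J, K with
      | none, none => exact ⟨1, fun ρ => by simp⟩
      | none, some k =>
        refine ⟨1, fun ρ => ?_⟩
        rw [one_mul]
        show f (Equiv.swap none none * ρ.optionCongr) ≤ f (Equiv.swap none (some k) * ρ.optionCongr) + 1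
        have h2 := hf (Equiv.swap none (some k)) ⟨none, some k, by simp, rfl⟩
          (Equiv.swap none (some k) * ρ.optionCongr)
        rw [← mul_assoc, Equiv.swap_mul_self, one_mul] at h2
        simpa [Equiv.swap_self, Equiv.Perm.one_def, Equiv.Perm.refl_mul] using h2
      | some j, none =>
        refine ⟨1, fun ρ => ?_⟩
        rw [one_mul]
        show f (Equiv.swap none (some j) * ρ.optionCongr) ≤ f (Equiv.swap none none * ρ.optionCongr) + 1
        have h2 := hf (Equiv.swap none (some j)) ⟨none, some j, by simp, rfl⟩ ρ.optionCongr
        simpa [Equiv.swap_self, Equiv.Perm.one_def, Equiv.Perm.refl_mul] using h2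
      | some j, some k =>
        by_cases hjk : j = k
        · subst hjk; exact ⟨1, fun ρ => by simp⟩
        refine ⟨Equiv.swap j k, fun ρ => ?_⟩
        show f (Equiv.swap none (some j) * (Equiv.swap j k * ρ).optionCongr)
          ≤ f (Equiv.swap none (some k) * ρ.optionCongr) + 1
        rw [optionCongr_mul, Equiv.optionCongr_swap, ← mul_assoc,
          swap_shift (by simp) (by simp), mul_assoc]
        exact hf (Equiv.swap (some j) (some k)) ⟨some j, some k, by simpa using hjk, rfl⟩ _
    intro J K
    obtain ⟨c, hc⟩ := key J K
    have hre : ∑ ρ : Equiv.Perm β, fJ J ρ = ∑ ρ : Equiv.Perm β, fJ J (c * ρ) :=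
      (Equiv.sum_comp (Equiv.mulLeft c) (fJ J)).symm
    rw [hre]
    calc ∑ ρ : Equiv.Perm β, fJ J (c * ρ) ≤ ∑ ρ : Equiv.Perm β, (fJ K ρ + 1) :=
          Finset.sum_le_sum fun ρ _ => hc ρ
      _ = (∑ ρ : Equiv.Perm β, fJ K ρ) + (m.factorial : ℝ) := by
          rw [Finset.sum_add_distrib, Finset.sum_const, card_univ, Fintype.card_perm, hcardβ]
          simp
  -- minimizing fiber
  obtain ⟨J₀, _, hJ₀⟩ := Finset.exists_min_image (Finset.univ : Finset (Option β))
    (fun J => ∑ ρ : Equiv.Perm β, fJ J ρ) ⟨none, Finset.mem_univ _⟩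
  set μ : Option β → ℝ := fun J => (∑ ρ : Equiv.Perm β, fJ J ρ) / (m.factorial : ℝ) with hμdef
  set a : ℝ := μ J₀ with hadef
  have hμ1 : ∀ J, a ≤ μ J := fun J =>
    (div_le_div_iff_of_pos_right hmf).mpr (hJ₀ J (Finset.mem_univ _))
  have hμ2 : ∀ J, μ J ≤ a + 1 := by
    intro J
    have h2 : μ J ≤ ((∑ ρ : Equiv.Perm β, fJ J₀ ρ) + (m.factorial : ℝ)) / (m.factorial : ℝ) :=
      (div_le_div_iff_of_pos_right hmf).mpr (hcomp J J₀)
    calc μ J ≤ ((∑ ρ : Equiv.Perm β, fJ J₀ ρ) + (m.factorial : ℝ)) / (m.factorial : ℝ) := h2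
      _ = a + 1 := by rw [hadef, hμdef]; field_simp
  -- per-fiber bound from IH
  have hIHJ : ∀ J, ∑ ρ : Equiv.Perm β, Real.exp (t * fJ J ρ) ≤
      (m.factorial : ℝ) * (Real.exp (t * μ J) * Real.exp (t ^ 2 * ((m - 1 : ℕ) : ℝ) / 8)) := by
    intro J
    have := IH (fJ J) (hfJ J) t
    rw [← Real.exp_add]
    exact this
  -- Hoeffding on the fiber means
  have hH := hoeffding_discrete (ι := Option β) μ a t hμ1 hμ2
  have hcardO : (Fintype.card (Option β) : ℝ) = (m : ℝ) + 1 := by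
    rw [Fintype.card_option, hcardβ]; push_cast; ring
  rw [hcardO] at hH
  -- assemble
  have hmain : ∑ pr : Equiv.Perm (Option β), Real.exp (t * f pr)
      ≤ (m.factorial : ℝ) * Real.exp (t ^ 2 * ((m - 1 : ℕ) : ℝ) / 8) *
        (((m:ℝ) + 1) * Real.exp (t * ((∑ J : Option β, μ J) / ((m:ℝ) + 1)) + t ^ 2 / 8)) := by
    calc ∑ pr : Equiv.Perm (Option β), Real.exp (t * f pr)
        = ∑ J : Option β, ∑ ρ : Equiv.Perm β, Real.exp (t * fJ J ρ) :=
          hdecomp (fun pr => Real.exp (t * f pr))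
      _ ≤ ∑ J : Option β, (m.factorial : ℝ) *
            (Real.exp (t * μ J) * Real.exp (t ^ 2 * ((m - 1 : ℕ) : ℝ) / 8)) :=
          Finset.sum_le_sum fun J _ => hIHJ J
      _ = (m.factorial : ℝ) * Real.exp (t ^ 2 * ((m - 1 : ℕ) : ℝ) / 8) *
            ∑ J : Option β, Real.exp (t * μ J) := by
          rw [Finset.mul_sum]; apply Finset.sum_congr rfl; intro J _; ring
      _ ≤ (m.factorial : ℝ) * Real.exp (t ^ 2 * ((m - 1 : ℕ) : ℝ) / 8) *
            (((m:ℝ) + 1) * Real.exp (t * ((∑ J : Option β, μ J) / ((m:ℝ) + 1)) + t ^ 2 / 8)) := by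
          apply mul_le_mul_of_nonneg_left hH
          positivity
  -- now rewrite the RHS into the required form
  have hsum_eq : ∑ J : Option β, μ J
      = (∑ pr : Equiv.Perm (Option β), f pr) / (m.factorial : ℝ) := by
    rw [hdecomp f, Finset.sum_div]
  have hfact : ((m + 1).factorial : ℝ) = ((m:ℝ) + 1) * (m.factorial : ℝ) := by
    rw [Nat.factorial_succ]; push_cast; ring
  have hcast1 : ((m - 1 : ℕ) : ℝ) = (m : ℝ) - 1 := by
    have : (1:ℕ) ≤ m := hm
    push_cast [Nat.cast_sub this]
    ring
  have hcast2 : ((m + 1 - 1 : ℕ) : ℝ) = (m : ℝ) := by norm_num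
  calc ∑ pr : Equiv.Perm (Option β), Real.exp (t * f pr)
      ≤ (m.factorial : ℝ) * Real.exp (t ^ 2 * ((m - 1 : ℕ) : ℝ) / 8) *
        (((m:ℝ) + 1) * Real.exp (t * ((∑ J : Option β, μ J) / ((m:ℝ) + 1)) + t ^ 2 / 8)) := hmain
    _ = ((m + 1).factorial : ℝ) *
        Real.exp (t * ((∑ pr : Equiv.Perm (Option β), f pr) / ((m + 1).factorial : ℝ))
          + t ^ 2 * ((m + 1 - 1 : ℕ) : ℝ) / 8) := by
        rw [hsum_eq, hfact, hcast1, hcast2, div_div]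
        have e1 : ∀ A B : ℝ, (m.factorial:ℝ) * Real.exp A * (((m:ℝ)+1) * Real.exp B)
            = (((m:ℝ)+1) * (m.factorial:ℝ)) * Real.exp (A + B) := by
          intro A B; rw [Real.exp_add]; ring
        rw [e1]
        congr 1
        ring

lemma permCongr_mul {α β : Type} (e : α ≃ β) (x y : Equiv.Perm α) :
    e.permCongr (x * y) = e.permCongr x * e.permCongr y := by
  ext b
  simp [Equiv.permCongr_apply, Equiv.Perm.mul_apply]

lemma permCongr_swap {α β : Type} [DecidableEq α] [DecidableEq β] (e : α ≃ β) (a b : α) :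
    e.permCongr (Equiv.swap a b) = Equiv.swap (e a) (e b) := by
  rw [show e.permCongr (Equiv.swap a b) = (e.symm.trans (Equiv.swap a b)).trans e from rfl]
  exact Equiv.symm_trans_swap_trans a b e

lemma permCongr_isSwap {α β : Type} [DecidableEq α] [DecidableEq β] (e : α ≃ β)
    (g : Equiv.Perm α) (hg : g.IsSwap) : (e.permCongr g).IsSwap := by
  obtain ⟨a, b, hab, rfl⟩ := hg
  exact ⟨e a, e b, fun h => hab (e.injective h), (permCongr_swap e a b)⟩

lemma maurey_transfer {α γ : Type} [DecidableEq α] [Fintype α] [DecidableEq γ] [Fintype γ]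
    (e : α ≃ γ) (N c : ℝ)
    (hb : ∀ (F : Equiv.Perm γ → ℝ),
      (∀ g : Equiv.Perm γ, g.IsSwap → ∀ pr, F (g * pr) ≤ F pr + 1) → ∀ t : ℝ,
      ∑ ρ : Equiv.Perm γ, Real.exp (t * F ρ) ≤
        N * Real.exp (t * ((∑ ρ : Equiv.Perm γ, F ρ) / N) + t ^ 2 * c / 8))
    (f : Equiv.Perm α → ℝ)
    (hf : ∀ g : Equiv.Perm α, g.IsSwap → ∀ pr, f (g * pr) ≤ f pr + 1) (t : ℝ) :
    ∑ pr : Equiv.Perm α, Real.exp (t * f pr) ≤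
      N * Real.exp (t * ((∑ pr : Equiv.Perm α, f pr) / N) + t ^ 2 * c / 8) := by
  set F : Equiv.Perm γ → ℝ := fun ρ => f (e.symm.permCongr ρ) with hF
  have hsum : ∀ (g : Equiv.Perm α → ℝ),
      ∑ ρ : Equiv.Perm γ, g (e.symm.permCongr ρ) = ∑ pr : Equiv.Perm α, g pr :=
    fun g => Equiv.sum_comp (e.symm.permCongr) g
  have hFlip : ∀ g : Equiv.Perm γ, g.IsSwap → ∀ pr, F (g * pr) ≤ F pr + 1 := by
    intro g hg ρ
    show f (e.symm.permCongr (g * ρ)) ≤ f (e.symm.permCongr ρ) + 1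
    rw [_root_.permCongr_mul]
    exact hf _ (permCongr_isSwap e.symm g hg) _
  have := hb F hFlip t
  rw [show (∑ ρ : Equiv.Perm γ, F ρ) = ∑ pr : Equiv.Perm α, f pr from hsum f,
    show (∑ ρ : Equiv.Perm γ, Real.exp (t * F ρ))
      = ∑ pr : Equiv.Perm α, Real.exp (t * f pr) from hsum (fun pr => Real.exp (t * f pr))] at this
  exact this

lemma maurey_core : ∀ (n : ℕ) (α : Type) [DecidableEq α] [Fintype α], Fintype.card α = n →
    ∀ (f : Equiv.Perm α → ℝ),
      (∀ g : Equiv.Perm α, g.IsSwap → ∀ pr, f (g * pr) ≤ f pr + 1) → ∀ t : ℝ,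
    ∑ pr : Equiv.Perm α, Real.exp (t * f pr) ≤
      (n.factorial : ℝ) * Real.exp (t * ((∑ pr : Equiv.Perm α, f pr) / (n.factorial : ℝ))
        + t ^ 2 * ((n - 1 : ℕ) : ℝ) / 8) := by
  have base : ∀ (n : ℕ) (α : Type) [DecidableEq α] [Fintype α], Fintype.card α = n → n ≤ 1 →
      ∀ (f : Equiv.Perm α → ℝ), ∀ t : ℝ,
      ∑ pr : Equiv.Perm α, Real.exp (t * f pr) ≤
        (n.factorial : ℝ) * Real.exp (t * ((∑ pr : Equiv.Perm α, f pr) / (n.factorial : ℝ))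
          + t ^ 2 * ((n - 1 : ℕ) : ℝ) / 8) := by
    intro n α _ _ hcard hn f t
    have huniv : (Finset.univ : Finset (Equiv.Perm α)) = {1} := by
      have hs : Subsingleton (Equiv.Perm α) := by
        apply Fintype.card_le_one_iff_subsingleton.mp
        rw [Fintype.card_perm, hcard]
        interval_cases n <;> simp
      exact Finset.eq_singleton_iff_unique_mem.mpr
        ⟨Finset.mem_univ _, fun x _ => Subsingleton.elim x 1⟩
    have hfact : (n.factorial : ℝ) = 1 := by interval_cases n <;> simp
    rw [huniv, Finset.sum_singleton, Finset.sum_singleton, hfact]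
    rw [one_mul, div_one]
    apply Real.exp_le_exp.mpr
    have : (0:ℝ) ≤ t ^ 2 * ((n - 1 : ℕ) : ℝ) / 8 := by positivity
    linarith
  intro n
  induction n with
  | zero => intro α _ _ hcard f hf t; exact base 0 α hcard (by norm_num) f t
  | succ m ih =>
    intro α _ _ hcard f hf t
    rcases Nat.eq_zero_or_pos m with rfl | hm
    · exact base 1 α hcard (by norm_num) f t
    have e : α ≃ Option (Fin m) := Fintype.equivOfCardEq (by
      rw [hcard, Fintype.card_option, Fintype.card_fin])
    exact maurey_transfer e ((m + 1).factorial : ℝ) ((m + 1 - 1 : ℕ) : ℝ)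
      (maurey_step m hm (Fin m) (Fintype.card_fin m)
        (fun F hF s => ih (Fin m) (Fintype.card_fin m) F hF s)) f hf t

end Stmt9Aux

open scoped Classical in
/-- **Isoperimetric inequality for the transposition Cayley graph on `Sₙ`**
(essentially Maurey's martingale inequality). If `X ⊆ Sₙ` has `|X| ≥ γ·n!` and
`h ≥ h₀ = √((n-1)·log(1/γ)/2)`, then the `h`-neighbourhood of `X` (all permutations
differing from some member of `X` by a product of at most `h` transpositions) has
size at least `(1 - e^{-2(h-h₀)²/(n-1)})·n!`. -/
theorem stmt9 (n : ℕ) (hn : 2 ≤ n) (γ : ℝ) (hγ0 : 0 < γ) (hγ1 : γ < 1)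
    (X : Finset (Equiv.Perm (Fin n))) (hX : γ * n.factorial ≤ (X.card : ℝ))
    (h₀ h : ℝ) (hh₀ : h₀ = Real.sqrt ((n - 1) * Real.log (1 / γ) / 2))
    (hh : h₀ ≤ h) :
    (1 - Real.exp (-2 * (h - h₀) ^ 2 / (n - 1))) * n.factorial ≤
      (((Finset.univ.filter fun π : Equiv.Perm (Fin n) =>
        ∃ σ ∈ X, ∃ l : List (Equiv.Perm (Fin n)),
          (l.length : ℝ) ≤ h ∧ (∀ τ ∈ l, τ.IsSwap) ∧ σ⁻¹ * π = l.prod).card : ℕ) : ℝ) := by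
  classical
  have hfacpos : (0:ℝ) < (n.factorial : ℝ) := by exact_mod_cast n.factorial_pos
  have hXne : X.Nonempty := by
    rw [← Finset.card_pos]
    by_contra hc
    push_neg at hc
    interval_cases hcc : X.card
    · simp only [Nat.cast_zero] at hX
      nlinarith
  -- the distance function
  set dset : Equiv.Perm (Fin n) → Set ℕ := fun pr =>
    {k : ℕ | ∃ σ ∈ X, ∃ l : List (Equiv.Perm (Fin n)),
      l.length = k ∧ (∀ τ ∈ l, τ.IsSwap) ∧ σ⁻¹ * pr = l.prod} with hdset
  have hdne : ∀ pr, (dset pr).Nonempty := by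
    intro pr
    obtain ⟨σ, hσ⟩ := hXne
    obtain ⟨l, hl1, hl2⟩ := (σ⁻¹ * pr).truncSwapFactors.out
    exact ⟨l.length, σ, hσ, l, rfl, hl2, hl1.symm⟩
  set dX : Equiv.Perm (Fin n) → ℕ := fun pr => sInf (dset pr) with hdX
  have hdmem : ∀ pr, dX pr ∈ dset pr := fun pr => Nat.sInf_mem (hdne pr)
  have hdzero : ∀ σ ∈ X, dX σ = 0 := by
    intro σ hσ
    have : (0:ℕ) ∈ dset σ := ⟨σ, hσ, [], rfl, by simp, by simp⟩
    exact Nat.le_zero.mp (Nat.sInf_le this)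
  have hdlip : ∀ g : Equiv.Perm (Fin n), g.IsSwap → ∀ pr, dX (g * pr) ≤ dX pr + 1 := by
    intro g hg pr
    obtain ⟨σ, hσ, l, hlen, hsw, hprod⟩ := hdmem pr
    apply Nat.sInf_le
    refine ⟨σ, hσ, l ++ [pr⁻¹ * g * pr], by simp [hlen], ?_, ?_⟩
    · intro τ hτ
      rcases List.mem_append.mp hτ with hτ | hτ
      · exact hsw τ hτ
      · rw [List.mem_singleton.mp hτ]
        have := conj_isSwap pr⁻¹ g hg
        simpa using this
    · rw [List.prod_append, List.prod_singleton, ← hprod]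
      group
  set f : Equiv.Perm (Fin n) → ℝ := fun pr => (dX pr : ℝ) with hfdef
  have hflip : ∀ g : Equiv.Perm (Fin n), g.IsSwap → ∀ pr, f (g * pr) ≤ f pr + 1 := by
    intro g hg pr
    have := hdlip g hg pr
    show ((dX (g * pr) : ℕ) : ℝ) ≤ (dX pr : ℝ) + 1
    exact_mod_cast this
  have hfliprev : ∀ g : Equiv.Perm (Fin n), g.IsSwap → ∀ pr, f pr ≤ f (g * pr) + 1 := by
    intro g hg pr
    have hgg : g * g = 1 := by obtain ⟨a, b, hab, rfl⟩ := hg; exact Equiv.swap_mul_self a b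
    have := hflip g hg (g * pr)
    rwa [← mul_assoc, hgg, one_mul] at this
  have hfnonneg : ∀ pr, 0 ≤ f pr := fun pr => Nat.cast_nonneg _
  have hcardfin : Fintype.card (Fin n) = n := Fintype.card_fin n
  have hn1 : (0:ℝ) < (n:ℝ) - 1 := by
    have : (2:ℝ) ≤ (n:ℝ) := by exact_mod_cast hn
    linarith
  have hcast : ((n - 1 : ℕ) : ℝ) = (n:ℝ) - 1 := by
    have : (1:ℕ) ≤ n := by omega
    push_cast [Nat.cast_sub this]
    ring
  set S : ℝ := ∑ pr : Equiv.Perm (Fin n), f pr with hS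
  set μ : ℝ := S / (n.factorial : ℝ) with hμ
  have hμ0 : 0 ≤ μ := by
    apply div_nonneg _ hfacpos.le
    exact Finset.sum_nonneg fun pr _ => hfnonneg pr
  have C1 : ∀ t : ℝ, ∑ pr : Equiv.Perm (Fin n), Real.exp (t * f pr) ≤
      (n.factorial : ℝ) * Real.exp (t * μ + t ^ 2 * ((n:ℝ) - 1) / 8) := by
    intro t
    have := maurey_core n (Fin n) hcardfin f hflip t
    rwa [hcast] at this
  have C2 : ∀ t : ℝ, ∑ pr : Equiv.Perm (Fin n), Real.exp (t * (-(f pr))) ≤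
      (n.factorial : ℝ) * Real.exp (t * (-μ) + t ^ 2 * ((n:ℝ) - 1) / 8) := by
    intro t
    have hneg : ∀ g : Equiv.Perm (Fin n), g.IsSwap → ∀ pr, (-(f (g * pr))) ≤ (-(f pr)) + 1 := by
      intro g hg pr
      have := hfliprev g hg pr
      linarith
    have := maurey_core n (Fin n) hcardfin (fun pr => -(f pr)) hneg t
    rw [hcast] at this
    have hms : (∑ pr : Equiv.Perm (Fin n), -(f pr)) = -S := by
      rw [hS, ← Finset.sum_neg_distrib]
    rwa [hms, neg_div, ← hμ] at this
  -- Step A : μ ≤ h₀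
  have hμh₀ : μ ≤ h₀ := by
    set t : ℝ := 4 * μ / ((n:ℝ) - 1) with ht
    have hlhs : γ * (n.factorial : ℝ) ≤ ∑ pr : Equiv.Perm (Fin n), Real.exp (t * (-(f pr))) := by
      calc γ * (n.factorial : ℝ) ≤ (X.card : ℝ) := hX
        _ = ∑ σ ∈ X, Real.exp (t * (-(f σ))) := by
            have hone : ∀ σ ∈ X, Real.exp (t * (-(f σ))) = 1 := by
              intro σ hσ
              simp [hfdef, hdzero σ hσ]
            rw [Finset.sum_congr rfl hone, Finset.sum_const, nsmul_eq_mul, mul_one]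
        _ ≤ ∑ pr : Equiv.Perm (Fin n), Real.exp (t * (-(f pr))) :=
            Finset.sum_le_sum_of_subset_of_nonneg (Finset.subset_univ X)
              (fun pr _ _ => (Real.exp_pos _).le)
    have hcomb := le_trans hlhs (C2 t)
    have hγle : γ ≤ Real.exp (-(2 * μ ^ 2 / ((n:ℝ) - 1))) := by
      have hexp : t * (-μ) + t ^ 2 * ((n:ℝ) - 1) / 8 = -(2 * μ ^ 2 / ((n:ℝ) - 1)) := by
        rw [ht]; field_simp; ring
      rw [hexp] at hcomb
      calc γ = γ * (n.factorial : ℝ) / (n.factorial : ℝ) := by field_simp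
        _ ≤ (n.factorial : ℝ) * Real.exp (-(2 * μ ^ 2 / ((n:ℝ) - 1))) / (n.factorial : ℝ) := by
            apply div_le_div_of_nonneg_right hcomb hfacpos.le
        _ = Real.exp (-(2 * μ ^ 2 / ((n:ℝ) - 1))) := by field_simp
    have hlog : Real.log γ ≤ -(2 * μ ^ 2 / ((n:ℝ) - 1)) := by
      rw [← Real.log_exp (-(2 * μ ^ 2 / ((n:ℝ) - 1)))]
      exact Real.log_le_log hγ0 hγle
    have hloginv : 2 * μ ^ 2 / ((n:ℝ) - 1) ≤ Real.log (1 / γ) := by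
      rw [one_div, Real.log_inv]
      linarith
    have h4 : 2 * μ ^ 2 ≤ ((n:ℝ) - 1) * Real.log (1 / γ) := by
      rw [div_le_iff₀ hn1] at hloginv
      linarith
    rw [hh₀]
    apply Real.le_sqrt_of_sq_le
    linarith
  have hh₀0 : 0 ≤ h₀ := le_trans hμ0 hμh₀
  have hh0 : 0 ≤ h := le_trans hh₀0 hh
  -- Step B
  set P : Equiv.Perm (Fin n) → Prop := fun pr =>
    ∃ σ ∈ X, ∃ l : List (Equiv.Perm (Fin n)),
      (l.length : ℝ) ≤ h ∧ (∀ τ ∈ l, τ.IsSwap) ∧ σ⁻¹ * pr = l.prod with hP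
  set NX := Finset.univ.filter P with hNX
  set Y := Finset.univ.filter (fun pr => ¬ P pr) with hY
  have hYlarge : ∀ pr ∈ Y, h < f pr := by
    intro pr hpr
    rw [hY, Finset.mem_filter] at hpr
    by_contra hc
    push_neg at hc
    obtain ⟨σ, hσ, l, hlen, hsw, hprod⟩ := hdmem pr
    exact hpr.2 ⟨σ, hσ, l, by rw [hlen]; exact_mod_cast hc, hsw, hprod⟩
  set t : ℝ := 4 * (h - μ) / ((n:ℝ) - 1) with ht
  have ht0 : 0 ≤ t := by
    apply div_nonneg _ hn1.le
    have : μ ≤ h := le_trans hμh₀ hh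
    linarith
  have hYbound : (Y.card : ℝ) * Real.exp (t * h) ≤
      (n.factorial : ℝ) * Real.exp (t * μ + t ^ 2 * ((n:ℝ) - 1) / 8) := by
    calc (Y.card : ℝ) * Real.exp (t * h) = ∑ _pr ∈ Y, Real.exp (t * h) := by
          rw [Finset.sum_const]; ring
      _ ≤ ∑ pr ∈ Y, Real.exp (t * f pr) := by
          apply Finset.sum_le_sum
          intro pr hpr
          apply Real.exp_le_exp.mpr
          exact mul_le_mul_of_nonneg_left (hYlarge pr hpr).le ht0
      _ ≤ ∑ pr : Equiv.Perm (Fin n), Real.exp (t * f pr) :=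
          Finset.sum_le_sum_of_subset_of_nonneg (Finset.subset_univ Y)
            (fun pr _ _ => (Real.exp_pos _).le)
      _ ≤ _ := C1 t
  have hexpB : t * μ + t ^ 2 * ((n:ℝ) - 1) / 8 - t * h = -(2 * (h - μ) ^ 2 / ((n:ℝ) - 1)) := by
    rw [ht]; field_simp; ring
  have hYle : (Y.card : ℝ) ≤ (n.factorial : ℝ) * Real.exp (-2 * (h - h₀) ^ 2 / ((n:ℝ) - 1)) := by
    have h1 : (Y.card : ℝ) ≤
        (n.factorial : ℝ) * Real.exp (-(2 * (h - μ) ^ 2 / ((n:ℝ) - 1))) := by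
      have h2 : (Y.card : ℝ) ≤ (n.factorial : ℝ) *
          Real.exp (t * μ + t ^ 2 * ((n:ℝ) - 1) / 8) * Real.exp (-(t * h)) := by
        rw [← le_div_iff₀ (Real.exp_pos (t * h))] at hYbound
        rwa [Real.exp_neg, ← div_eq_mul_inv]
      calc (Y.card : ℝ) ≤ (n.factorial : ℝ) *
            Real.exp (t * μ + t ^ 2 * ((n:ℝ) - 1) / 8) * Real.exp (-(t * h)) := h2
        _ = (n.factorial : ℝ) * Real.exp (-(2 * (h - μ) ^ 2 / ((n:ℝ) - 1))) := by
            rw [mul_assoc, ← Real.exp_add, ← hexpB]; ring_nf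
    have h3 : Real.exp (-(2 * (h - μ) ^ 2 / ((n:ℝ) - 1))) ≤
        Real.exp (-2 * (h - h₀) ^ 2 / ((n:ℝ) - 1)) := by
      apply Real.exp_le_exp.mpr
      have hsq : 2 * (h - h₀) ^ 2 ≤ 2 * (h - μ) ^ 2 := by nlinarith [hμh₀, hh, hμ0]
      have key := div_le_div_of_nonneg_right hsq hn1.le
      have heq : -2 * (h - h₀) ^ 2 / ((n:ℝ) - 1) = -(2 * (h - h₀) ^ 2 / ((n:ℝ) - 1)) := by
        ring
      rw [heq]
      exact neg_le_neg key
    calc (Y.card : ℝ) ≤ _ := h1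
      _ ≤ _ := by
        apply mul_le_mul_of_nonneg_left h3 hfacpos.le
  have hsplit : (NX.card : ℝ) + (Y.card : ℝ) = (n.factorial : ℝ) := by
    have hYc : Y = NXᶜ := by
      ext pr
      simp only [hY, hNX, Finset.mem_filter, Finset.mem_univ, true_and, Finset.mem_compl]
    have hcc := Finset.card_compl NX
    rw [Fintype.card_perm, Fintype.card_fin] at hcc
    have hle : NX.card ≤ n.factorial := by
      calc NX.card ≤ Fintype.card (Equiv.Perm (Fin n)) := Finset.card_le_univ NX
        _ = n.factorial := by rw [Fintype.card_perm, Fintype.card_fin]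
    rw [hYc, hcc]
    push_cast [Nat.cast_sub hle]
    ring
  have hgoal : (1 - Real.exp (-2 * (h - h₀) ^ 2 / ((n:ℝ) - 1))) * (n.factorial : ℝ)
      ≤ (NX.card : ℝ) := by linarith [hYle, hsplit]
  exact hgoal
end

section
/- Let t ∈ ℕ and n ≥ t+2. Then the family 𝒟 = {σ ∈ S_n : σ(i) = i for all i ≤ t, and σ(j) = j for some j > t+1} ∪ {(1 t+1), (2 t+1), …, (t t+1)} has size |𝒟| = (n−t)! − d_{n−t} − d_{n−t−1} + t. -/
/-- The family `𝒟 ⊆ Sₙ` (with points `0`-indexed: `[t]` corresponds to values `< t`,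
the point `t+1` corresponds to value `t`, and `j > t+1` corresponds to values `> t`):
permutations fixing `1,…,t` pointwise and fixing some `j > t+1`, together with the
transpositions `(1 t+1), …, (t t+1)`. -/
def extremalFamilyD (t n : ℕ) : Finset (Equiv.Perm (Fin n)) :=
  (Finset.univ.filter fun σ : Equiv.Perm (Fin n) =>
    (∀ i : Fin n, (i : ℕ) < t → σ i = i) ∧ ∃ j : Fin n, t < (j : ℕ) ∧ σ j = j)
  ∪ (Finset.univ.filter fun σ : Equiv.Perm (Fin n) =>
    ∃ k m : Fin n, (k : ℕ) < t ∧ (m : ℕ) = t ∧ σ = Equiv.swap k m)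

open Equiv Function

lemma cardD1 (t n : ℕ) (hn : t + 2 ≤ n) :
    (Finset.univ.filter fun σ : Equiv.Perm (Fin n) =>
      (∀ i : Fin n, (i : ℕ) < t → σ i = i) ∧ ∃ j : Fin n, t < (j : ℕ) ∧ σ j = j).card
    = (n - t).factorial - (numDerangements (n - t) + numDerangements (n - t - 1)) ∧
    numDerangements (n - t) + numDerangements (n - t - 1) ≤ (n - t).factorial := by
  have htn : t < n := by omega
  set p : Fin n → Prop := fun x => t ≤ (x : ℕ) with hp
  set β := Subtype p with hβ
  set e := Equiv.Perm.subtypeEquivSubtypePerm p with he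
  set Q : Equiv.Perm (Fin n) → Prop := fun σ => ∃ j : Fin n, t < (j : ℕ) ∧ σ j = j with hQ
  -- card β = n - t
  have hcardβ : Fintype.card β = n - t := by
    have h1 : Fintype.card β = Fintype.card {x : Fin n // (⟨t, htn⟩ : Fin n) ≤ x} := by
      apply Fintype.card_congr; apply Equiv.subtypeEquivRight; intro x; simp [hp, Fin.le_def]
    rw [h1, Fintype.card_subtype]
    have h2 := Fin.card_Ici (⟨t, htn⟩ : Fin n)
    rw [← h2]; congr 1; ext x; simp
  -- the main equivalence
  have E : {σ : Equiv.Perm (Fin n) // (∀ i : Fin n, (i : ℕ) < t → σ i = i) ∧ Q σ}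
      ≃ {f : Equiv.Perm β // ∃ j : β, t < ((j : Fin n) : ℕ) ∧ f j = j} := by
    refine ?_
    calc {σ : Equiv.Perm (Fin n) // (∀ i : Fin n, (i : ℕ) < t → σ i = i) ∧ Q σ}
        ≃ {σ : Equiv.Perm (Fin n) // (∀ a : Fin n, ¬ p a → σ a = a) ∧ Q σ} :=
          Equiv.subtypeEquivRight (fun σ => by simp [hp, Nat.not_le])
      _ ≃ {g : {f : Equiv.Perm (Fin n) // ∀ a, ¬ p a → f a = a} // Q g.1} :=
          (Equiv.subtypeSubtypeEquivSubtypeInter _ _).symm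
      _ ≃ {f : Equiv.Perm β // Q (e f).1} := (e.subtypeEquiv (fun f => Iff.rfl)).symm
      _ ≃ {f : Equiv.Perm β // ∃ j : β, t < ((j : Fin n) : ℕ) ∧ f j = j} := by
          apply Equiv.subtypeEquivRight
          intro f
          constructor
          · rintro ⟨j, hj, hfj⟩
            have hpj : p j := le_of_lt hj
            refine ⟨⟨j, hpj⟩, hj, ?_⟩
            have := Equiv.Perm.subtypeEquivSubtypePerm_apply_of_mem (p := p) f hpj
            rw [hfj] at this
            exact Subtype.ext this.symm
          · rintro ⟨j, hj, hfj⟩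
            refine ⟨j.1, hj, ?_⟩
            have := Equiv.Perm.subtypeEquivSubtypePerm_apply_of_mem (p := p) f j.2
            rw [Subtype.coe_eta, hfj] at this
            exact this
  -- complement equivalence with derangements
  set b0 : β := ⟨⟨t, htn⟩, le_refl t⟩ with hb0
  have Ecomp : {f : Equiv.Perm β // ¬ ∃ j : β, t < ((j : Fin n) : ℕ) ∧ f j = j}
      ≃ (derangements ({b0}ᶜ : Set β)) ⊕ (derangements β) := by
    refine (Equiv.subtypeEquivRight ?_).trans
      (derangements.atMostOneFixedPointEquivSum_derangements b0)
    intro f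
    constructor
    · intro h x hx
      simp only [Set.mem_singleton_iff]
      by_contra hxb
      apply h
      refine ⟨x, ?_, hx⟩
      have h2 : (x : Fin n) ≠ (⟨t, htn⟩ : Fin n) := fun hc => hxb (Subtype.ext hc)
      have h3 : ((x : Fin n) : ℕ) ≠ t := fun hc => h2 (Fin.ext hc)
      have h4 : t ≤ ((x : Fin n) : ℕ) := x.2
      omega
    · rintro h ⟨j, hj, hfj⟩
      have hjb : j ∈ ({b0} : Set β) := h hfj
      simp only [Set.mem_singleton_iff] at hjb
      rw [hjb] at hj
      simp [hb0] at hj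
  have hcard_compl : Fintype.card {f : Equiv.Perm β // ¬ ∃ j : β, t < ((j : Fin n) : ℕ) ∧ f j = j}
      = numDerangements (n - t - 1) + numDerangements (n - t) := by
    rw [Fintype.card_congr Ecomp, Fintype.card_sum,
        card_derangements_eq_numDerangements, card_derangements_eq_numDerangements, hcardβ]
    congr 2
    rw [Fintype.card_compl_set, Set.card_singleton, hcardβ]
  have hperm : Fintype.card (Equiv.Perm β) = (n - t).factorial := by
    rw [Fintype.card_perm, hcardβ]
  have hsub : Fintype.card {f : Equiv.Perm β // ¬ ∃ j : β, t < ((j : Fin n) : ℕ) ∧ f j = j}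
      = Fintype.card (Equiv.Perm β)
        - Fintype.card {f : Equiv.Perm β // ∃ j : β, t < ((j : Fin n) : ℕ) ∧ f j = j} :=
    Fintype.card_subtype_compl _
  have hle1 := Fintype.card_subtype_le (fun f : Equiv.Perm β => ∃ j : β, t < ((j : Fin n) : ℕ) ∧ f j = j)
  have hle2 := Fintype.card_subtype_le (fun f : Equiv.Perm β => ¬ ∃ j : β, t < ((j : Fin n) : ℕ) ∧ f j = j)
  have hfilter : (Finset.univ.filter fun σ : Equiv.Perm (Fin n) =>
      (∀ i : Fin n, (i : ℕ) < t → σ i = i) ∧ Q σ).card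
      = Fintype.card {f : Equiv.Perm β // ∃ j : β, t < ((j : Fin n) : ℕ) ∧ f j = j} := by
    rw [← Fintype.card_congr E, Fintype.card_subtype]
  constructor
  · rw [hfilter]; omega
  · omega

lemma cardD2 (t n : ℕ) (hn : t + 2 ≤ n) :
    (Finset.univ.filter fun σ : Equiv.Perm (Fin n) =>
      ∃ k m : Fin n, (k : ℕ) < t ∧ (m : ℕ) = t ∧ σ = Equiv.swap k m).card = t := by
  have htn : t < n := by omega
  set g : Fin t → Equiv.Perm (Fin n) :=
    fun k => Equiv.swap ⟨k, by omega⟩ ⟨t, htn⟩ with hg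
  have hginj : Function.Injective g := by
    intro a b hab
    have h1 : g a ⟨t, htn⟩ = g b ⟨t, htn⟩ := by rw [hab]
    simp only [hg, Equiv.swap_apply_right] at h1
    exact Fin.ext (by simpa using congrArg Fin.val h1)
  have himg : (Finset.univ.filter fun σ : Equiv.Perm (Fin n) =>
      ∃ k m : Fin n, (k : ℕ) < t ∧ (m : ℕ) = t ∧ σ = Equiv.swap k m)
      = Finset.univ.image g := by
    ext σ
    simp only [Finset.mem_filter, Finset.mem_univ, true_and, Finset.mem_image]
    constructor
    · rintro ⟨k, m, hk, hm, rfl⟩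
      refine ⟨⟨k, hk⟩, ?_⟩
      have hm' : m = ⟨t, htn⟩ := Fin.ext hm
      have hk' : (⟨((k : ℕ) : ℕ), by omega⟩ : Fin n) = k := Fin.ext rfl
      simp only [hg, hk', hm']
    · rintro ⟨a, rfl⟩
      exact ⟨⟨a, by omega⟩, ⟨t, htn⟩, by simp, rfl, rfl⟩
  rw [himg, Finset.card_image_of_injective _ hginj, Finset.card_univ, Fintype.card_fin]

/-- For `n ≥ t+2`, the family `𝒟` has size `(n-t)! - d_{n-t} - d_{n-t-1} + t`, where
`d_m` denotes the number of derangements of an `m`-element set. -/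
theorem stmt11 (t n : ℕ) (hn : t + 2 ≤ n) :
    ((extremalFamilyD t n).card : ℤ) =
      (n - t).factorial - numDerangements (n - t) - numDerangements (n - t - 1) + t := by
  have h1 := cardD1 t n hn
  have h2 := cardD2 t n hn
  have hdisj : Disjoint
      (Finset.univ.filter fun σ : Equiv.Perm (Fin n) =>
        (∀ i : Fin n, (i : ℕ) < t → σ i = i) ∧ ∃ j : Fin n, t < (j : ℕ) ∧ σ j = j)
      (Finset.univ.filter fun σ : Equiv.Perm (Fin n) =>
        ∃ k m : Fin n, (k : ℕ) < t ∧ (m : ℕ) = t ∧ σ = Equiv.swap k m) := by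
    rw [Finset.disjoint_left]
    intro σ hσ1 hσ2
    simp only [Finset.mem_filter, Finset.mem_univ, true_and] at hσ1 hσ2
    obtain ⟨k, m, hk, hm, rfl⟩ := hσ2
    have := hσ1.1 k hk
    rw [Equiv.swap_apply_left] at this
    have := congrArg Fin.val this
    omega
  rw [extremalFamilyD, Finset.card_union_of_disjoint hdisj, h2, h1.1]
  have := h1.2
  omega
end

section
/- Let t ∈ ℕ and n ≥ t+3. Then the family ℬ = {σ ∈ A_n : σ(i) = i for all i ≤ t, and σ(j) = (n−1 n)(j) for some j > t+1} ∪ {(1 t+1)(n−1 n), (2 t+1)(n−1 n), …, (t t+1)(n−1 n)} has size |ℬ| = (n−t)!/2 − o_{n−t} − o_{n−t−1} + t. -/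
open scoped Classical in
/-- The family `ℬ ⊆ Aₙ` (points `0`-indexed: `[t]` corresponds to values `< t`, the
point `t+1` to the value `t`, `j > t+1` to values `> t`, and the points `n-1, n` to the
values `n-2, n-1`): even permutations fixing `1,…,t` pointwise and agreeing with the
transposition `(n-1 n)` at some `j > t+1`, together with the permutations
`(i t+1)(n-1 n)`, `i ∈ [t]`. -/
noncomputable def famB (t n : ℕ) : Finset (Equiv.Perm (Fin n)) :=
  (Finset.univ.filter fun σ : Equiv.Perm (Fin n) =>
    σ ∈ alternatingGroup (Fin n) ∧ (∀ i : Fin n, (i : ℕ) < t → σ i = i) ∧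
    ∃ j a b : Fin n, t < (j : ℕ) ∧ (a : ℕ) = n - 2 ∧ (b : ℕ) = n - 1 ∧
      σ j = Equiv.swap a b j)
  ∪ (Finset.univ.filter fun σ : Equiv.Perm (Fin n) =>
    ∃ k m a b : Fin n, (k : ℕ) < t ∧ (m : ℕ) = t ∧ (a : ℕ) = n - 2 ∧ (b : ℕ) = n - 1 ∧
      σ = Equiv.swap k m * Equiv.swap a b)

/-- `o_m`: the number of odd derangements of an `m`-element set, i.e. odd permutations
of `[m]` without fixed points. -/
def numOddDerangements (m : ℕ) : ℕ :=
  (Finset.univ.filter fun σ : Equiv.Perm (Fin m) =>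
    (∀ x : Fin m, σ x ≠ x) ∧ Equiv.Perm.sign σ = -1).card


open Finset Equiv Equiv.Perm
open scoped Classical

namespace Stmt17Aux

variable {n : ℕ}

def eSub (c : ℕ) (hc : c ≤ n) : Fin (n - c) ≃ {x : Fin n // c ≤ (x : ℕ)} where
  toFun x := ⟨⟨c + (x : ℕ), by have := x.isLt; omega⟩, by simp⟩
  invFun y := ⟨(y.1 : ℕ) - c, by have := y.1.isLt; have := y.2; omega⟩
  left_inv x := by ext; simp
  right_inv y := by
    have := y.2
    apply Subtype.ext; apply Fin.ext; simp; omega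

noncomputable def FD (c : ℕ) (hc : c ≤ n) (π : Perm (Fin (n - c))) : Perm (Fin n) :=
  ofSubtype ((eSub c hc).permCongr π)

noncomputable def GD (c : ℕ) (hc : c ≤ n) (σ : Perm (Fin n)) : Perm (Fin (n - c)) :=
  if h : ∀ x : Fin n, c ≤ (x : ℕ) ↔ c ≤ ((σ x : Fin n) : ℕ) then
    (eSub c hc).permCongr.symm (σ.subtypePerm fun x => (h x).symm) else 1

lemma FD_apply_lt (c : ℕ) (hc : c ≤ n) (π : Perm (Fin (n - c))) (i : Fin n)
    (hi : (i : ℕ) < c) : FD c hc π i = i :=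
  ofSubtype_apply_of_not_mem _ (by omega)

lemma FD_apply_ge (c : ℕ) (hc : c ≤ n) (π : Perm (Fin (n - c))) (j : Fin n)
    (hj : c ≤ (j : ℕ)) :
    FD c hc π j = ((eSub c hc) (π ((eSub c hc).symm ⟨j, hj⟩)) : Fin n) := by
  rw [FD, ofSubtype_apply_of_mem (p := fun x : Fin n => c ≤ (x : ℕ)) _ hj, Equiv.permCongr_apply]

lemma sign_FD (c : ℕ) (hc : c ≤ n) (π : Perm (Fin (n - c))) :
    sign (FD c hc π) = sign π := by
  rw [FD, sign_ofSubtype, Equiv.Perm.sign_permCongr]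

lemma hmem_of_fix (c : ℕ) {σ : Perm (Fin n)} (hfix : ∀ i : Fin n, (i : ℕ) < c → σ i = i) :
    ∀ x : Fin n, c ≤ (x : ℕ) ↔ c ≤ ((σ x : Fin n) : ℕ) := by
  intro x
  constructor
  · intro hx
    by_contra hlt
    push_neg at hlt
    have h1 := hfix (σ x) hlt
    have := σ.injective h1
    omega
  · intro hx
    by_contra hlt
    push_neg at hlt
    rw [hfix x hlt] at hx
    omega

lemma FD_GD (c : ℕ) (hc : c ≤ n) {σ : Perm (Fin n)}
    (hfix : ∀ i : Fin n, (i : ℕ) < c → σ i = i) : FD c hc (GD c hc σ) = σ := by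
  have h := hmem_of_fix c hfix
  ext x
  rw [GD, dif_pos h]
  by_cases hx : c ≤ (x : ℕ)
  · rw [FD, Equiv.apply_symm_apply, ofSubtype_apply_of_mem (p := fun x : Fin n => c ≤ (x : ℕ)) _ hx, Perm.subtypePerm_apply]
  · rw [FD_apply_lt _ _ _ _ (by omega), hfix x (by omega)]

lemma FD_pres (c : ℕ) (hc : c ≤ n) (π : Perm (Fin (n - c))) :
    ∀ x : Fin n, c ≤ (x : ℕ) ↔ c ≤ ((FD c hc π x : Fin n) : ℕ) := by
  intro x
  constructor
  · intro hx
    rw [FD_apply_ge c hc π x hx]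
    exact ((eSub c hc) (π ((eSub c hc).symm ⟨x, hx⟩))).2
  · intro hx
    by_contra hlt
    push_neg at hlt
    rw [FD_apply_lt c hc π x hlt] at hx
    omega

lemma GD_FD (c : ℕ) (hc : c ≤ n) (π : Perm (Fin (n - c))) : GD c hc (FD c hc π) = π := by
  rw [GD, dif_pos (FD_pres c hc π)]
  rw [Equiv.symm_apply_eq]
  refine Equiv.ext fun y => Subtype.ext ?_
  rw [Perm.subtypePerm_apply]
  simp only [Equiv.permCongr_apply]
  rw [FD_apply_ge c hc π y.1 y.2]

lemma card_filter_fix (c : ℕ) (hc : c ≤ n)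
    (Q : Perm (Fin n) → Prop) (R : Perm (Fin (n - c)) → Prop)
    (hQR : ∀ π : Perm (Fin (n - c)), R π ↔ Q (FD c hc π)) :
    (univ.filter fun σ : Perm (Fin n) => (∀ i : Fin n, (i : ℕ) < c → σ i = i) ∧ Q σ).card
      = (univ.filter R).card := by
  refine Finset.card_bij' (fun σ _ => GD c hc σ) (fun π _ => FD c hc π) ?_ ?_ ?_ ?_
  · intro σ hσ
    rw [mem_filter] at hσ ⊢
    refine ⟨mem_univ _, ?_⟩
    rw [hQR, FD_GD c hc hσ.2.1]
    exact hσ.2.2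
  · intro π hπ
    rw [mem_filter] at hπ ⊢
    exact ⟨mem_univ _, fun i hi => FD_apply_lt c hc π i hi, (hQR π).mp hπ.2⟩
  · intro σ hσ
    rw [mem_filter] at hσ
    exact FD_GD c hc hσ.2.1
  · intro π _
    exact GD_FD c hc π

lemma cardEq {α : Type*} [Fintype α] {p q : α → Prop} {instp : DecidablePred p}
    {instq : DecidablePred q} (h : ∀ a, p a ↔ q a) :
    (@Finset.filter _ p instp univ).card = (@Finset.filter _ q instq univ).card := by
  congr 1
  exact @Finset.filter_congr _ _ _ instp instq _ fun x _ => h x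

lemma card_sign_one (m : ℕ) (hm : 2 ≤ m) :
    (univ.filter fun π : Perm (Fin m) => sign π = 1).card = m.factorial / 2 := by
  have hnt : Nontrivial (Fin m) := Fin.nontrivial_iff_two_le.mpr hm
  have h := two_mul_card_alternatingGroup (α := Fin m)
  rw [Fintype.card_perm, Fintype.card_fin] at h
  have h2 : Fintype.card (alternatingGroup (Fin m))
      = (univ.filter fun π : Perm (Fin m) => sign π = 1).card := by
    rw [← Fintype.card_subtype]
    exact Fintype.card_congr (Equiv.subtypeEquivRight fun σ => Perm.mem_alternatingGroup)
  rw [h2] at h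
  omega

lemma card_even_fix (c : ℕ) (hc : c ≤ n) (hm : 2 ≤ n - c) :
    (univ.filter fun σ : Perm (Fin n) =>
      (∀ i : Fin n, (i : ℕ) < c → σ i = i) ∧ sign σ = 1).card = (n - c).factorial / 2 := by
  have h := card_filter_fix c hc (fun σ => sign σ = 1)
    (fun π : Perm (Fin (n - c)) => sign π = 1) (fun π => by simp only [sign_FD])
  exact (cardEq fun _ => Iff.rfl).trans (h.trans ((cardEq fun _ => Iff.rfl).trans (card_sign_one _ hm)))

lemma card_oddder_fix (c : ℕ) (hc : c ≤ n) :
    (univ.filter fun σ : Perm (Fin n) =>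
      (∀ i : Fin n, (i : ℕ) < c → σ i = i) ∧
        (∀ j : Fin n, c ≤ (j : ℕ) → σ j ≠ j) ∧ sign σ = -1).card
      = numOddDerangements (n - c) := by
  have h := card_filter_fix c hc
    (fun σ => (∀ j : Fin n, c ≤ (j : ℕ) → σ j ≠ j) ∧ sign σ = -1)
    (fun π : Perm (Fin (n - c)) => (∀ x, π x ≠ x) ∧ sign π = -1) ?_
  · rw [numOddDerangements]
    exact (cardEq fun _ => Iff.rfl).trans (h.trans (cardEq fun _ => Iff.rfl))
  · intro π
    show ((∀ x, π x ≠ x) ∧ sign π = -1) ↔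
      ((∀ j : Fin n, c ≤ (j : ℕ) → FD c hc π j ≠ j) ∧ sign (FD c hc π) = -1)
    rw [sign_FD]
    constructor
    · rintro ⟨hder, hs⟩
      refine ⟨fun j hj hEq => ?_, hs⟩
      rw [FD_apply_ge c hc π j hj] at hEq
      have : (eSub c hc) (π ((eSub c hc).symm ⟨j, hj⟩)) = ⟨j, hj⟩ := Subtype.ext hEq
      have := (eSub c hc).symm_apply_eq.mpr this.symm
      exact hder _ this.symm
    · rintro ⟨hder, hs⟩
      refine ⟨fun x hEq => ?_, hs⟩
      have hx := ((eSub c hc) x).2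
      refine hder ((eSub c hc) x).1 hx ?_
      rw [FD_apply_ge c hc π _ hx]
      have : (⟨((eSub c hc) x).1, hx⟩ : {y : Fin n // c ≤ (y : ℕ)}) = (eSub c hc) x :=
        Subtype.ext rfl
      rw [this, Equiv.symm_apply_apply, hEq]

end Stmt17Aux

open Stmt17Aux in
/-- For `n ≥ t+3`, the family `ℬ` has size `(n-t)!/2 - o_{n-t} - o_{n-t-1} + t`. -/
theorem stmt17 (t n : ℕ) (hn : t + 3 ≤ n) :
    ((famB t n).card : ℚ) = (n - t).factorial / 2
      - numOddDerangements (n - t) - numOddDerangements (n - t - 1) + t := by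
  classical
  obtain ⟨tF, htF⟩ : ∃ x : Fin n, (x : ℕ) = t := ⟨⟨t, by omega⟩, rfl⟩
  obtain ⟨aF, haF⟩ : ∃ x : Fin n, (x : ℕ) = n - 2 := ⟨⟨n - 2, by omega⟩, rfl⟩
  obtain ⟨bF, hbF⟩ : ∃ x : Fin n, (x : ℕ) = n - 1 := ⟨⟨n - 1, by omega⟩, rfl⟩
  have hab : aF ≠ bF := fun h => by rw [h, hbF] at haF; omega
  have hswap : ∀ x : Fin n, (x : ℕ) < n - 2 → Equiv.swap aF bF x = x := by
    intro x hx
    refine Equiv.swap_apply_of_ne_of_ne (fun h => ?_) fun h => ?_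
    · rw [h, haF] at hx; omega
    · rw [h, hbF] at hx; omega
  set A := Finset.univ.filter (fun σ : Equiv.Perm (Fin n) =>
    (∀ i : Fin n, (i : ℕ) < t → σ i = i) ∧ Equiv.Perm.sign σ = 1 ∧
      ∃ j : Fin n, t < (j : ℕ) ∧ σ j = Equiv.swap aF bF j) with hA
  set Bs := Finset.univ.filter (fun σ : Equiv.Perm (Fin n) =>
    ∃ k : Fin n, (k : ℕ) < t ∧ σ = Equiv.swap k tF * Equiv.swap aF bF) with hBs
  -- famB = A ∪ Bs
  have hfam : famB t n = A ∪ Bs := by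
    ext σ
    simp only [famB, hA, hBs, Finset.mem_union, Finset.mem_filter, Finset.mem_univ, true_and,
      Equiv.Perm.mem_alternatingGroup]
    constructor
    · rintro (⟨hs, hfix, j, a, b, hj, ha, hb, hsw⟩ | ⟨k, m, a, b, hk, hm, ha, hb, hEq⟩)
      · have ea : a = aF := Fin.val_injective (by omega)
        have eb : b = bF := Fin.val_injective (by omega)
        subst ea; subst eb
        exact Or.inl ⟨hfix, hs, j, hj, hsw⟩
      · have ea : a = aF := Fin.val_injective (by omega)
        have eb : b = bF := Fin.val_injective (by omega)
        have em : m = tF := Fin.val_injective (by omega)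
        subst ea; subst eb; subst em
        exact Or.inr ⟨k, hk, hEq⟩
    · rintro (⟨hfix, hs, j, hj, hsw⟩ | ⟨k, hk, hEq⟩)
      · exact Or.inl ⟨hs, hfix, j, aF, bF, hj, haF, hbF, hsw⟩
      · exact Or.inr ⟨k, tF, aF, bF, hk, htF, haF, hbF, hEq⟩
  -- |Bs| = t
  have hBval : ∀ k : Fin n, (k : ℕ) < t → (Equiv.swap k tF * Equiv.swap aF bF) k = tF := by
    intro k hk
    rw [Equiv.Perm.mul_apply, hswap k (by omega), Equiv.swap_apply_left]
  have hBcard : Bs.card = t := by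
    have himg : Bs = (Finset.univ.filter fun k : Fin n => (k : ℕ) < t).image
        (fun k => Equiv.swap k tF * Equiv.swap aF bF) := by
      ext σ
      simp only [hBs, Finset.mem_filter, Finset.mem_univ, true_and, Finset.mem_image]
      constructor
      · rintro ⟨k, hk, hEq⟩
        exact ⟨k, hk, hEq.symm⟩
      · rintro ⟨k, hk, hEq⟩
        exact ⟨k, hk, hEq.symm⟩
    have hcf : (Finset.univ.filter fun k : Fin n => (k : ℕ) < t).card = t := by
      refine Eq.trans ?_ (Finset.card_range t)
      refine Finset.card_bij' (fun k _ => (k : ℕ)) (fun k hk => ⟨k, ?_⟩) ?_ ?_ ?_ ?_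
      · simp only [Finset.mem_range] at hk; omega
      · intro k hk; simp only [Finset.mem_filter, Finset.mem_univ, true_and] at hk
        simpa using hk
      · intro k hk
        simp only [Finset.mem_filter, Finset.mem_univ, true_and]
        simp only [Finset.mem_range] at hk
        exact hk
      · intro k hk; exact Fin.val_injective (by simp)
      · intro k hk; rfl
    rw [himg, Finset.card_image_of_injOn, hcf]
    intro k hk k' hk' hEq
    simp only [Finset.mem_coe, Finset.mem_filter, Finset.mem_univ, true_and] at hk hk'
    by_contra hne
    have h1 := mul_right_cancel hEq
    have h2 : Equiv.swap k tF k = tF := Equiv.swap_apply_left _ _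
    have h3 : k ≠ tF := fun h => by rw [h] at hk; omega
    rw [h1] at h2
    rw [Equiv.swap_apply_of_ne_of_ne hne h3] at h2
    exact h3 h2
  -- A and Bs are disjoint
  have hdisj : Disjoint A Bs := by
    rw [Finset.disjoint_left]
    intro σ hσA hσB
    simp only [hA, Finset.mem_filter, Finset.mem_univ, true_and] at hσA
    simp only [hBs, Finset.mem_filter, Finset.mem_univ, true_and] at hσB
    obtain ⟨k, hk, hEq⟩ := hσB
    have h1 : σ k = tF := by rw [hEq]; exact hBval k hk
    have h2 : σ k = k := hσA.1 k hk
    rw [h2] at h1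
    rw [h1, htF] at hk
    omega
  -- E = A ∪ D
  set E := Finset.univ.filter (fun σ : Equiv.Perm (Fin n) =>
    (∀ i : Fin n, (i : ℕ) < t → σ i = i) ∧ Equiv.Perm.sign σ = 1) with hE
  set D := Finset.univ.filter (fun σ : Equiv.Perm (Fin n) =>
    (∀ i : Fin n, (i : ℕ) < t → σ i = i) ∧ Equiv.Perm.sign σ = 1 ∧
      ∀ j : Fin n, t < (j : ℕ) → σ j ≠ Equiv.swap aF bF j) with hD
  have hEAD : E = A ∪ D := by
    ext σ
    simp only [hE, hA, hD, Finset.mem_union, Finset.mem_filter, Finset.mem_univ, true_and]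
    constructor
    · rintro ⟨hfix, hs⟩
      by_cases h : ∃ j : Fin n, t < (j : ℕ) ∧ σ j = Equiv.swap aF bF j
      · exact Or.inl ⟨hfix, hs, h⟩
      · push_neg at h
        exact Or.inr ⟨hfix, hs, h⟩
    · rintro (⟨hfix, hs, _⟩ | ⟨hfix, hs, _⟩) <;> exact ⟨hfix, hs⟩
  have hdisjAD : Disjoint A D := by
    rw [Finset.disjoint_left]
    intro σ hσA hσD
    simp only [hA, Finset.mem_filter, Finset.mem_univ, true_and] at hσA
    simp only [hD, Finset.mem_filter, Finset.mem_univ, true_and] at hσD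
    obtain ⟨j, hj, hsw⟩ := hσA.2.2
    exact hσD.2.2 j hj hsw
  -- |E| = (n-t)!/2
  have hEcard : E.card = (n - t).factorial / 2 :=
    (cardEq fun _ => Iff.rfl).trans (card_even_fix t (by omega) (by omega))
  -- D ↔ D2 via multiplication by the swap
  set D2 := Finset.univ.filter (fun σ : Equiv.Perm (Fin n) =>
    (∀ i : Fin n, (i : ℕ) < t → σ i = i) ∧ Equiv.Perm.sign σ = -1 ∧
      ∀ j : Fin n, t < (j : ℕ) → σ j ≠ j) with hD2
  have hDD2 : D.card = D2.card := by
    refine Finset.card_bij' (fun σ _ => Equiv.swap aF bF * σ)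
      (fun σ _ => Equiv.swap aF bF * σ) ?_ ?_ ?_ ?_
    · intro σ hσ
      simp only [hD, Finset.mem_filter, Finset.mem_univ, true_and] at hσ
      obtain ⟨hfix, hs, hder⟩ := hσ
      simp only [hD2, Finset.mem_filter, Finset.mem_univ, true_and]
      refine ⟨fun i hi => ?_, ?_, fun j hj hEq => ?_⟩
      · rw [Equiv.Perm.mul_apply, hfix i hi, hswap i (by omega)]
      · rw [Equiv.Perm.sign_mul, Equiv.Perm.sign_swap hab, hs, mul_one]
      · rw [Equiv.Perm.mul_apply] at hEq
        refine hder j hj ?_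
        have := congrArg (Equiv.swap aF bF) hEq
        rwa [Equiv.swap_apply_self] at this
    · intro σ hσ
      simp only [hD2, Finset.mem_filter, Finset.mem_univ, true_and] at hσ
      obtain ⟨hfix, hs, hder⟩ := hσ
      simp only [hD, Finset.mem_filter, Finset.mem_univ, true_and]
      refine ⟨fun i hi => ?_, ?_, fun j hj hEq => ?_⟩
      · rw [Equiv.Perm.mul_apply, hfix i hi, hswap i (by omega)]
      · rw [Equiv.Perm.sign_mul, Equiv.Perm.sign_swap hab, hs]; simp
      · rw [Equiv.Perm.mul_apply] at hEq
        exact hder j hj (Equiv.injective _ hEq)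
    · intro σ _
      show Equiv.swap aF bF * (Equiv.swap aF bF * σ) = σ
      rw [← mul_assoc, Equiv.swap_mul_self, one_mul]
    · intro σ _
      show Equiv.swap aF bF * (Equiv.swap aF bF * σ) = σ
      rw [← mul_assoc, Equiv.swap_mul_self, one_mul]
  -- split D2
  set Da := Finset.univ.filter (fun σ : Equiv.Perm (Fin n) =>
    (∀ i : Fin n, (i : ℕ) < t + 1 → σ i = i) ∧
      (∀ j : Fin n, t + 1 ≤ (j : ℕ) → σ j ≠ j) ∧ Equiv.Perm.sign σ = -1) with hDa
  set Db := Finset.univ.filter (fun σ : Equiv.Perm (Fin n) =>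
    (∀ i : Fin n, (i : ℕ) < t → σ i = i) ∧
      (∀ j : Fin n, t ≤ (j : ℕ) → σ j ≠ j) ∧ Equiv.Perm.sign σ = -1) with hDb
  have hsplit : D2 = Da ∪ Db := by
    ext σ
    simp only [hD2, hDa, hDb, Finset.mem_union, Finset.mem_filter, Finset.mem_univ, true_and]
    constructor
    · rintro ⟨hfix, hs, hder⟩
      by_cases hσt : σ tF = tF
      · refine Or.inl ⟨fun i hi => ?_, fun j hj => hder j (by omega), hs⟩
        by_cases hi' : (i : ℕ) < t
        · exact hfix i hi'
        · have : i = tF := Fin.val_injective (by omega)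
          rw [this]; exact hσt
      · refine Or.inr ⟨hfix, fun j hj => ?_, hs⟩
        by_cases hj' : t < (j : ℕ)
        · exact hder j hj'
        · have : j = tF := Fin.val_injective (by omega)
          rw [this]; exact hσt
    · rintro (⟨hfix, hder, hs⟩ | ⟨hfix, hder, hs⟩)
      · exact ⟨fun i hi => hfix i (by omega), hs, fun j hj => hder j (by omega)⟩
      · exact ⟨hfix, hs, fun j hj => hder j (by omega)⟩
  have hdisjab : Disjoint Da Db := by
    rw [Finset.disjoint_left]
    intro σ hσa hσb
    simp only [hDa, Finset.mem_filter, Finset.mem_univ, true_and] at hσa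
    simp only [hDb, Finset.mem_filter, Finset.mem_univ, true_and] at hσb
    exact hσb.2.1 tF (by omega) (hσa.1 tF (by omega))
  have hDacard : Da.card = numOddDerangements (n - t - 1) := by
    have h1 : n - (t + 1) = n - t - 1 := by omega
    have := card_oddder_fix (n := n) (t + 1) (by omega)
    rw [h1] at this
    exact (cardEq fun _ => Iff.rfl).trans this
  have hDbcard : Db.card = numOddDerangements (n - t) :=
    (cardEq fun _ => Iff.rfl).trans (card_oddder_fix (n := n) t (by omega))
  -- assemble on ℕ
  have hAcard : A.card + D.card = (n - t).factorial / 2 := by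
    rw [← hEcard, hEAD, Finset.card_union_of_disjoint hdisjAD]
  have hDcard : D.card = numOddDerangements (n - t - 1) + numOddDerangements (n - t) := by
    rw [hDD2, hsplit, Finset.card_union_of_disjoint hdisjab, hDacard, hDbcard]
  have hfamcard : (famB t n).card = A.card + t := by
    rw [hfam, Finset.card_union_of_disjoint hdisj, hBcard]
  have key : (famB t n).card + numOddDerangements (n - t) + numOddDerangements (n - t - 1)
      = (n - t).factorial / 2 + t := by omega
  -- cast to ℚ
  have hdvd : ((((n - t).factorial / 2 : ℕ)) : ℚ) = ((n - t).factorial : ℚ) / 2 :=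
    Nat.cast_div_charZero (Nat.dvd_factorial (by norm_num) (by omega))
  have := congrArg (fun x : ℕ => (x : ℚ)) key
  push_cast at this
  rw [hdvd] at this
  linarith
end

section
/- For every n ≥ 4 there exists a function f : A_n → ℝ and a real n×n matrix B = (b_{i,j}) such that f(σ) = Σ_{i=1}^{n} b_{i,σ(i)} for every σ ∈ A_n (so f is a linear combination of the characteristic functions of the 1-cosets of A_n), f(σ) ≥ 0 for every σ ∈ A_n, and yet there is no real n×n matrix C = (c_{i,j}) with all entries non-negative satisfying f(σ) = Σ_{i=1}^{n} c_{i,σ(i)} for every σ ∈ A_n; i.e., f is a non-negative function in the span of the characteristic functions of the 1-cosets of A_n which cannot be written as a non-negative linear combination of them. -/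
/-- The matrix `B` witnessing the counterexample:
`∑ i, B i (σ i) = (n+4)/4 + [σa=a] - [σa=b] + [σb=b] - [σb=a] - (1/4)·#{i ∉ {a,b} : σ i = i}`. -/
noncomputable def Bmat18 (n : ℕ) (a b : Fin n) : Matrix (Fin n) (Fin n) ℝ := fun i j =>
  ((n : ℝ) + 4) / (4 * n) +
    ((if j = i then (1 : ℝ) else 0) - (if j = Equiv.swap a b i then (1 : ℝ) else 0)) -
    (if j = i ∧ i ≠ a ∧ i ≠ b then (1 : ℝ) / 4 else 0)

lemma Bsum18 (n : ℕ) (hn : 4 ≤ n) (a b : Fin n) (hab : a ≠ b) (σ : Equiv.Perm (Fin n)) :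
    ∑ i, Bmat18 n a b i (σ i) =
      ((n : ℝ) + 4) / 4 +
        ((if σ a = a then (1 : ℝ) else 0) - (if σ a = b then (1 : ℝ) else 0)) +
        ((if σ b = b then (1 : ℝ) else 0) - (if σ b = a then (1 : ℝ) else 0)) -
        ∑ i, (if σ i = i ∧ i ≠ a ∧ i ≠ b then (1 : ℝ) / 4 else 0) := by
  have hn0 : (n : ℝ) ≠ 0 := Nat.cast_ne_zero.mpr (by omega)
  have e1 : ∑ _i : Fin n, (((n : ℝ) + 4) / (4 * n)) = ((n : ℝ) + 4) / 4 := by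
    rw [Finset.sum_const, Finset.card_univ, Fintype.card_fin, nsmul_eq_mul]
    field_simp
  have e2 : ∑ i : Fin n,
      ((if σ i = i then (1 : ℝ) else 0) - (if σ i = Equiv.swap a b i then (1 : ℝ) else 0)) =
      ((if σ a = a then (1 : ℝ) else 0) - (if σ a = b then (1 : ℝ) else 0)) +
      ((if σ b = b then (1 : ℝ) else 0) - (if σ b = a then (1 : ℝ) else 0)) := by
    rw [← Finset.sum_subset (Finset.subset_univ ({a, b} : Finset (Fin n)))]
    · rw [Finset.sum_pair hab, Equiv.swap_apply_left, Equiv.swap_apply_right]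
    · intro i _ hi
      simp only [Finset.mem_insert, Finset.mem_singleton, not_or] at hi
      rw [Equiv.swap_apply_of_ne_of_ne hi.1 hi.2, sub_self]
  have : ∑ i, Bmat18 n a b i (σ i) =
      ∑ i : Fin n, ((((n : ℝ) + 4) / (4 * n) +
        ((if σ i = i then (1 : ℝ) else 0) - (if σ i = Equiv.swap a b i then (1 : ℝ) else 0))) -
        (if σ i = i ∧ i ≠ a ∧ i ≠ b then (1 : ℝ) / 4 else 0)) := rfl
  rw [this, Finset.sum_sub_distrib, Finset.sum_add_distrib, e1, e2]
  ring

lemma sumInd2_18 (n : ℕ) (a b : Fin n) :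
    ∑ i : Fin n, ((1 : ℝ) / 4 - (if i = a then (1 : ℝ) / 4 else 0) -
      (if i = b then (1 : ℝ) / 4 else 0)) = ((n : ℝ) - 2) / 4 := by
  rw [Finset.sum_sub_distrib, Finset.sum_sub_distrib]
  simp [Finset.sum_ite_eq', Finset.card_univ]
  ring

lemma sumInd4_18 (n : ℕ) (a b c d : Fin n) :
    ∑ i : Fin n, ((1 : ℝ) / 4 - (if i = a then (1 : ℝ) / 4 else 0) -
      (if i = b then (1 : ℝ) / 4 else 0) - (if i = c then (1 : ℝ) / 4 else 0) -
      (if i = d then (1 : ℝ) / 4 else 0)) = ((n : ℝ) - 4) / 4 := by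
  rw [Finset.sum_sub_distrib, Finset.sum_sub_distrib, Finset.sum_sub_distrib,
    Finset.sum_sub_distrib]
  simp [Finset.sum_ite_eq', Finset.card_univ]
  ring

lemma Qle2_18 (n : ℕ) (a b : Fin n) (hab : a ≠ b) (σ : Equiv.Perm (Fin n)) :
    ∑ i, (if σ i = i ∧ i ≠ a ∧ i ≠ b then (1 : ℝ) / 4 else 0) ≤ ((n : ℝ) - 2) / 4 := by
  rw [← sumInd2_18 n a b]
  apply Finset.sum_le_sum
  intro i _
  by_cases hia : i = a
  · subst hia; simp [hab]
  · by_cases hib : i = b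
    · subst hib; simp [Ne.symm hab]
    · simp only [hia, hib, if_false]
      split <;> norm_num

lemma Qtau18 (n : ℕ) (a b : Fin n) (hab : a ≠ b) :
    ∑ i, (if Equiv.swap a b i = i ∧ i ≠ a ∧ i ≠ b then (1 : ℝ) / 4 else 0) =
      ((n : ℝ) - 2) / 4 := by
  rw [← sumInd2_18 n a b]
  apply Finset.sum_congr rfl
  intro i _
  by_cases hia : i = a
  · subst hia; simp [hab]
  · by_cases hib : i = b
    · subst hib; simp [Ne.symm hab]
    · rw [Equiv.swap_apply_of_ne_of_ne hia hib]
      simp [hia, hib]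

lemma Qle4_18 (n : ℕ) (a b : Fin n) (hab : a ≠ b) (σ : Equiv.Perm (Fin n))
    (hσa : σ a = b) (hσb : σ b = a) (hσ : σ ∈ alternatingGroup (Fin n)) :
    ∑ i, (if σ i = i ∧ i ≠ a ∧ i ≠ b then (1 : ℝ) / 4 else 0) ≤ ((n : ℝ) - 4) / 4 := by
  have hne : σ ≠ Equiv.swap a b := by
    intro h
    rw [Equiv.Perm.mem_alternatingGroup, h, Equiv.Perm.sign_swap hab] at hσ
    exact absurd hσ (by decide)
  obtain ⟨i₀, hi₀⟩ : ∃ i, σ i ≠ Equiv.swap a b i := by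
    by_contra h
    push_neg at h
    exact hne (Equiv.ext h)
  have hi₀a : i₀ ≠ a := fun h => hi₀ (by rw [h, hσa, Equiv.swap_apply_left])
  have hi₀b : i₀ ≠ b := fun h => hi₀ (by rw [h, hσb, Equiv.swap_apply_right])
  have hmove₀ : σ i₀ ≠ i₀ := by
    rwa [Equiv.swap_apply_of_ne_of_ne hi₀a hi₀b] at hi₀
  have hi₁a : σ i₀ ≠ a := fun h => hi₀b (σ.injective (h.trans hσb.symm))
  have hi₁b : σ i₀ ≠ b := fun h => hi₀a (σ.injective (h.trans hσa.symm))
  have hi₁i₀ : σ i₀ ≠ i₀ := hmove₀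
  have hmove₁ : σ (σ i₀) ≠ σ i₀ := fun h => hmove₀ (σ.injective h)
  rw [← sumInd4_18 n a b i₀ (σ i₀)]
  apply Finset.sum_le_sum
  intro i _
  by_cases hia : i = a
  · subst hia; simp [hab, Ne.symm hi₀a, Ne.symm hi₁a]
  · by_cases hib : i = b
    · subst hib; simp [Ne.symm hab, Ne.symm hi₀b, Ne.symm hi₁b]
    · by_cases hii₀ : i = i₀
      · subst hii₀; simp [hmove₀, hia, hib, Ne.symm hi₁i₀]
      · by_cases hii₁ : i = σ i₀
        · subst hii₁; simp [hmove₁, hia, hib, hii₀]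
        · simp only [hia, hib, hii₀, hii₁, if_false]
          split <;> norm_num

lemma key18 (n : ℕ) (a b c d : Fin n) (hab : a ≠ b) (hac : a ≠ c) (had : a ≠ d)
    (hbc : b ≠ c) (hbd : b ≠ d) (hcd : c ≠ d) (M : Matrix (Fin n) (Fin n) ℝ) :
    (∑ i, M i ((1 : Equiv.Perm (Fin n)) i)) +
    (∑ i, M i ((Equiv.swap a b * Equiv.swap c d) i)) +
    (∑ i, M i ((Equiv.swap a b * Equiv.swap b c) i)) +
    (∑ i, M i ((Equiv.swap a d * Equiv.swap d b) i)) -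
    (∑ i, M i ((Equiv.swap b c * Equiv.swap c d) i)) -
    (∑ i, M i ((Equiv.swap a d * Equiv.swap d c) i)) =
    2 * ∑ i, M i (Equiv.swap a b i) := by
  have hba := hab.symm; have hca := hac.symm; have hda := had.symm
  have hcb := hbc.symm; have hdb := hbd.symm; have hdc := hcd.symm
  have h : ∀ i : Fin n,
      M i ((1 : Equiv.Perm (Fin n)) i) +
      M i ((Equiv.swap a b * Equiv.swap c d) i) +
      M i ((Equiv.swap a b * Equiv.swap b c) i) +
      M i ((Equiv.swap a d * Equiv.swap d b) i) -
      M i ((Equiv.swap b c * Equiv.swap c d) i) -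
      M i ((Equiv.swap a d * Equiv.swap d c) i) -
      2 * M i (Equiv.swap a b i) = 0 := by
    intro i
    simp only [Equiv.Perm.one_apply, Equiv.Perm.mul_apply, Equiv.swap_apply_def]
    by_cases hia : i = a <;> by_cases hib : i = b <;> by_cases hic : i = c <;>
      by_cases hid : i = d <;>
      simp only [hia, hib, hic, hid, if_true, if_false, hab, hac, had, hbc, hbd, hcd,
        hba, hca, hda, hcb, hdb, hdc] <;>
      simp_all <;> ring
  have hz := Finset.sum_eq_zero (fun i (_ : i ∈ Finset.univ) => h i)
  rw [Finset.sum_sub_distrib, Finset.sum_sub_distrib, Finset.sum_sub_distrib,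
    Finset.sum_add_distrib, Finset.sum_add_distrib, Finset.sum_add_distrib,
    ← Finset.mul_sum] at hz
  linarith

lemma aux18 (n : ℕ) (hn : 4 ≤ n) (a b c d : Fin n)
    (hab : a ≠ b) (hac : a ≠ c) (had : a ≠ d)
    (hbc : b ≠ c) (hbd : b ≠ d) (hcd : c ≠ d) :
    ∃ (f : Equiv.Perm (Fin n) → ℝ) (B : Matrix (Fin n) (Fin n) ℝ),
      (∀ σ ∈ alternatingGroup (Fin n), f σ = ∑ i, B i (σ i)) ∧
      (∀ σ ∈ alternatingGroup (Fin n), 0 ≤ f σ) ∧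
      ¬ ∃ C : Matrix (Fin n) (Fin n) ℝ,
        (∀ i j, 0 ≤ C i j) ∧
        (∀ σ ∈ alternatingGroup (Fin n), f σ = ∑ i, C i (σ i)) := by
  have hcast : (4 : ℝ) ≤ (n : ℝ) := by exact_mod_cast hn
  refine ⟨fun σ => ∑ i, Bmat18 n a b i (σ i), Bmat18 n a b, fun σ _ => rfl, ?_, ?_⟩
  · -- non-negativity on the alternating group
    intro σ hσ
    show (0 : ℝ) ≤ ∑ i, Bmat18 n a b i (σ i)
    rw [Bsum18 n hn a b hab σ]
    have hQ2 := Qle2_18 n a b hab σ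
    by_cases h1 : σ a = b ∧ σ b = a
    · have hQ4 := Qle4_18 n a b hab σ h1.1 h1.2 hσ
      have hsa : ¬ σ a = a := fun h => hab (h.symm.trans h1.1)
      have hsb : ¬ σ b = b := fun h => hab (h1.2.symm.trans h)
      rw [if_neg hsa, if_pos h1.1, if_neg hsb, if_pos h1.2]
      linarith
    · have hbr : (-1 : ℝ) ≤
          ((if σ a = a then (1 : ℝ) else 0) - (if σ a = b then (1 : ℝ) else 0)) +
          ((if σ b = b then (1 : ℝ) else 0) - (if σ b = a then (1 : ℝ) else 0)) := by
        by_cases h2 : σ a = b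
        · have h3 : ¬ σ b = a := fun h => h1 ⟨h2, h⟩
          have hsa : ¬ σ a = a := fun h => hab (h.symm.trans h2)
          rw [if_neg hsa, if_pos h2, if_neg h3]
          split <;> norm_num
        · rw [if_neg h2]
          by_cases h3 : σ b = a
          · have hsb : ¬ σ b = b := fun h => hab (h3.symm.trans h)
            rw [if_neg hsb, if_pos h3]
            split <;> norm_num
          · rw [if_neg h3]
            split <;> split <;> norm_num
      linarith
  · -- no non-negative representation
    rintro ⟨C, hC0, hC⟩
    have hCs : ∀ σ ∈ alternatingGroup (Fin n),
        (∑ i, Bmat18 n a b i (σ i)) = ∑ i, C i (σ i) := hC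
    have hmem : ∀ (x y z w : Fin n), x ≠ y → z ≠ w →
        Equiv.swap x y * Equiv.swap z w ∈ alternatingGroup (Fin n) := by
      intro x y z w hxy hzw
      rw [Equiv.Perm.mem_alternatingGroup, map_mul, Equiv.Perm.sign_swap hxy,
        Equiv.Perm.sign_swap hzw]
      decide
    have h1mem : (1 : Equiv.Perm (Fin n)) ∈ alternatingGroup (Fin n) := one_mem _
    have hkC := key18 n a b c d hab hac had hbc hbd hcd C
    have hkB := key18 n a b c d hab hac had hbc hbd hcd (Bmat18 n a b)
    rw [← hCs _ h1mem, ← hCs _ (hmem a b c d hab hcd), ← hCs _ (hmem a b b c hab hbc),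
      ← hCs _ (hmem a d d b had (Ne.symm hbd)), ← hCs _ (hmem b c c d hbc hcd),
      ← hCs _ (hmem a d d c had (Ne.symm hcd))] at hkC
    -- hence ∑ i, C i (swap a b i) = ∑ i, B i (swap a b i) = -1/2 < 0, contradiction
    have hBtau : (∑ i, Bmat18 n a b i (Equiv.swap a b i)) = -(1 / 2 : ℝ) := by
      rw [Bsum18 n hn a b hab (Equiv.swap a b), Equiv.swap_apply_left, Equiv.swap_apply_right,
        Qtau18 n a b hab, if_neg (Ne.symm hab), if_pos rfl, if_neg hab, if_pos rfl]
      ring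
    have hCnn : (0 : ℝ) ≤ ∑ i, C i (Equiv.swap a b i) :=
      Finset.sum_nonneg fun i _ => hC0 i _
    rw [hkB, hBtau] at hkC
    linarith

/-- For every `n ≥ 4` there is a non-negative function on `Aₙ` lying in the span of the
characteristic functions of the `1`-cosets of `Aₙ` (i.e. of the form
`f(σ) = ∑ᵢ b_{i,σ(i)}` for a real matrix `B`) which cannot be written as a
non-negative linear combination of those characteristic functions (i.e. there is no
entrywise non-negative matrix `C` with `f(σ) = ∑ᵢ c_{i,σ(i)}` for all `σ ∈ Aₙ`). -/
theorem stmt18 (n : ℕ) (hn : 4 ≤ n) :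
    ∃ (f : Equiv.Perm (Fin n) → ℝ) (B : Matrix (Fin n) (Fin n) ℝ),
      (∀ σ ∈ alternatingGroup (Fin n), f σ = ∑ i, B i (σ i)) ∧
      (∀ σ ∈ alternatingGroup (Fin n), 0 ≤ f σ) ∧
      ¬ ∃ C : Matrix (Fin n) (Fin n) ℝ,
        (∀ i j, 0 ≤ C i j) ∧
        (∀ σ ∈ alternatingGroup (Fin n), f σ = ∑ i, C i (σ i)) := by
  exact aux18 n hn ⟨0, by omega⟩ ⟨1, by omega⟩ ⟨2, by omega⟩ ⟨3, by omega⟩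
    (Fin.ne_of_val_ne (by norm_num)) (Fin.ne_of_val_ne (by norm_num))
    (Fin.ne_of_val_ne (by norm_num)) (Fin.ne_of_val_ne (by norm_num))
    (Fin.ne_of_val_ne (by norm_num)) (Fin.ne_of_val_ne (by norm_num))
end
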